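/- arXiv:1307.0767 — 5 statements merged into one kernel-verified Lean document; each statement's English description precedes it below -/
import Mathlib

section
/- Let A ⊆ ℕ with BD(A) = α > 0, and let (I_n) be a sequence of intervals in ℕ with |I_n| → ∞ and lim_{n→∞} |A ∩ I_n|/|I_n| = α. Then there is a set L ⊆ ℕ satisfying: (i) limsup_{n→∞} |L ∩ I_n|/|I_n| ≥ α; and (ii) for every finite F ⊆ L, the set A ∩ ⋂_{x∈F} (A − x) is infinite, where A − x := {a ∈ ℕ : a + x ∈ A}. -/
/-- The (upper) Banach density of a set `A ⊆ ℕ`: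
`BD(A) = lim_{n→∞} sup_{m∈ℕ} |A ∩ [m, m+n]| / n`. -/
noncomputable def banachDensity (A : Set ℕ) : ℝ :=
  Filter.atTop.limsup fun n : ℕ =>
    ⨆ m : ℕ, (Nat.card ↥(A ∩ Set.Icc m (m + n)) : ℝ) / n

/-!
Let `p` be an ultrafilter on `ℕ` containing `A` and all tails `[r, ∞)`, and put
`L = {x | A - x ∈ p}`. Then `A ∩ ⋂_{x ∈ F} (A - x) ∈ p` for finite `F ⊆ L`, so this set is
infinite. Moreover, for `p`-almost every `m` the count `|A ∩ (m + I)|` is at most `|L ∩ I|`, so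
(i) follows once `p` concentrates on shifts `m` with `|A ∩ (m + I_{n_j})| ≥ (α - ε_j) |I_{n_j}|`
for a subsequence and some `ε_j → 0`. Take `I_{n_j}` so long that every window of its length
has density at most `α + ε_j ^ 2`. On a long interval `T` where `A` has density close to `α`,
the shifted counts average to about `α |I_{n_j}|`, so by Markov's inequality at most a fraction
of about `ε_j` of `T` violates the `j`-th condition. Since `∑ ε_j < α`, some `m ∈ A ∩ T` meets
any finitely many conditions, which is the finite intersection property needed for `p`.
-/

open Filter Finset Topology
open scoped Classical

noncomputable def countIn (B : Set ℕ) (u v : ℕ) : ℕ := #{x ∈ Icc u v | x ∈ B}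

section Counting

variable (B : Set ℕ)

theorem natCard_inter_Icc_eq_countIn (u v : ℕ) : Nat.card ↥(B ∩ Set.Icc u v) = countIn B u v := by
  rw [countIn, ← Set.ncard_coe_finset, Nat.card_coe_set_eq, coe_filter]
  congr 1
  ext x
  simp [and_comm]

theorem countIn_le_card (u v : ℕ) : countIn B u v ≤ #(Icc u v) :=
  card_filter_le _ _

theorem countIn_le_succ (x k : ℕ) : countIn B x (x + k) ≤ k + 1 := by
  have h := countIn_le_card B x (x + k)
  rw [Nat.card_Icc] at h
  omega

theorem countIn_mono {u v u' v' : ℕ} (hu : u' ≤ u) (hv : v ≤ v') :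
    countIn B u v ≤ countIn B u' v' :=
  card_le_card (filter_subset_filter _ (Icc_subset_Icc hu hv))

theorem countIn_le_add (u v w : ℕ) : countIn B u w ≤ countIn B u v + countIn B v w := by
  refine (card_le_card ?_).trans (card_union_le _ _)
  intro x hx
  simp only [mem_filter, mem_union, mem_Icc] at hx ⊢
  by_cases h : x ≤ v
  exacts [.inl ⟨⟨hx.1.1, h⟩, hx.2⟩, .inr ⟨⟨by omega, hx.1.2⟩, hx.2⟩]

theorem countIn_add_add (m u v : ℕ) : countIn B (m + u) (m + v) = #{i ∈ Icc u v | m + i ∈ B} := by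
  rw [countIn, ← map_add_left_Icc, filter_map, card_map]
  rfl

theorem countIn_add_right (u v i : ℕ) : countIn B (u + i) (v + i) = #{m ∈ Icc u v | m + i ∈ B} := by
  simp_rw [add_comm _ i, countIn_add_add]

theorem sum_countIn_add (x y u v : ℕ) :
    ∑ m ∈ Icc x y, countIn B (m + u) (m + v) = ∑ i ∈ Icc u v, countIn B (x + i) (y + i) := by
  simp_rw [countIn_add_add, countIn_add_right]
  exact sum_card_bipartiteAbove_eq_sum_card_bipartiteBelow (fun m i => m + i ∈ B)

theorem mul_countIn_le_sum_countIn (x n a k : ℕ) :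
    (k + 1) * countIn B x (x + n) ≤
      ∑ m ∈ Icc x (x + n), countIn B (m + a) (m + a + k) + (k + 1) * (a + k + 1) := by
  have hsplit := countIn_le_add B x (x + a + k) (x + n)
  have hhead := countIn_le_succ B x (a + k)
  have htail : (k + 1) * countIn B (x + a + k) (x + n) ≤
      ∑ m ∈ Icc x (x + n), countIn B (m + a) (m + a + k) := by
    simp_rw [add_assoc _ a k, sum_countIn_add]
    calc (k + 1) * countIn B (x + (a + k)) (x + n)
        = ∑ _i ∈ Icc a (a + k), countIn B (x + (a + k)) (x + n) := by
          simp only [sum_const, Nat.card_Icc, smul_eq_mul]; congr 1; omega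
      _ ≤ _ := sum_le_sum fun i hi => countIn_mono B (by have := mem_Icc.1 hi; omega) (by omega)
  rw [← add_assoc] at hhead
  nlinarith

theorem countIn_le_card_filter_ge_add (u v M : ℕ) :
    countIn B u v ≤ #{m ∈ Icc u v | m ∈ B ∧ M ≤ m} + M := by
  refine (card_le_card (t := {m ∈ Icc u v | m ∈ B ∧ M ≤ m} ∪ range M) ?_).trans
    ((card_union_le _ _).trans_eq (by rw [card_range]))
  intro m hm
  simp only [mem_filter, mem_union, mem_range] at hm ⊢
  by_cases h : M ≤ m
  exacts [.inl ⟨hm.1, hm.2, h⟩, .inr (by omega)]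

end Counting

theorem card_filter_lt_sub_mul_le {ι : Type*} (s : Finset ι) (f : ι → ℝ) {M e : ℝ}
    (hf : ∀ i ∈ s, f i ≤ M) : #{i ∈ s | f i < M - e} * e ≤ #s * M - ∑ i ∈ s, f i := by
  calc #{i ∈ s | f i < M - e} * e ≤ ∑ i ∈ s with f i < M - e, (M - f i) := by
        rw [← nsmul_eq_mul]
        exact card_nsmul_le_sum _ _ _ fun i hi => by linarith [(mem_filter.1 hi).2]
    _ ≤ ∑ i ∈ s, (M - f i) :=
        sum_le_sum_of_subset_of_nonneg (filter_subset _ _) fun i hi _ => sub_nonneg.2 (hf i hi)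
    _ = _ := by rw [sum_sub_distrib, sum_const, nsmul_eq_mul]

section BanachDensity

variable (A : Set ℕ)

theorem countIn_div_le_two (n m : ℕ) : (countIn A m (m + n) : ℝ) / n ≤ 2 := by
  rcases Nat.eq_zero_or_pos n with rfl | hn
  · simp
  rw [div_le_iff₀ (by positivity)]
  have h : (countIn A m (m + n) : ℝ) ≤ n + 1 := by exact_mod_cast countIn_le_succ A m n
  have h1 : (1 : ℝ) ≤ n := by exact_mod_cast hn
  linarith

theorem bddAbove_range_countIn_div (n : ℕ) :
    BddAbove (Set.range fun m => (countIn A m (m + n) : ℝ) / n) :=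
  ⟨2, Set.forall_mem_range.2 (countIn_div_le_two A n)⟩

theorem banachDensity_eq_limsup_countIn :
    banachDensity A = limsup (fun n : ℕ => ⨆ m, (countIn A m (m + n) : ℝ) / n) atTop := by
  simp only [banachDensity, natCard_inter_Icc_eq_countIn]

theorem banachDensity_nonneg : 0 ≤ banachDensity A := by
  rw [banachDensity_eq_limsup_countIn]
  exact le_limsup_of_frequently_le
    (Frequently.of_forall fun n => Real.iSup_nonneg fun m => by positivity)
    (isBoundedUnder_of ⟨2, fun n => ciSup_le (countIn_div_le_two A n)⟩)

theorem eventually_countIn_le {η : ℝ} (hη : 0 < η) :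
    ∀ᶠ k in atTop, ∀ x, (countIn A x (x + k) : ℝ) ≤ (banachDensity A + η) * k := by
  have hlt := (banachDensity_eq_limsup_countIn A).symm.trans_lt (lt_add_of_pos_right _ hη)
  filter_upwards [eventually_lt_of_limsup_lt hlt
    (isBoundedUnder_of ⟨2, fun n => ciSup_le (countIn_div_le_two A n)⟩),
    eventually_gt_atTop 0] with k hk hk0 x
  rw [← div_le_iff₀ (by exact_mod_cast hk0)]
  exact (le_ciSup (bddAbove_range_countIn_div A k) x).trans hk.le

theorem frequently_lt_countIn {δ : ℝ} (hδ : 0 < δ) :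
    ∃ᶠ n in atTop, ∃ x, (banachDensity A - δ) * n < countIn A x (x + n) := by
  have hlt := (sub_lt_self _ hδ).trans_eq (banachDensity_eq_limsup_countIn A)
  have hcobdd : IsCoboundedUnder (· ≤ ·) atTop
      (fun n : ℕ => ⨆ m, (countIn A m (m + n) : ℝ) / n) :=
    (isBoundedUnder_of ⟨0, fun n => Real.iSup_nonneg fun m => by positivity⟩).isCoboundedUnder_le
  refine ((frequently_lt_of_lt_limsup hcobdd hlt).and_eventually (eventually_gt_atTop 0)).mono ?_
  rintro n ⟨hn, hn0⟩
  obtain ⟨x, hx⟩ := (lt_ciSup_iff (bddAbove_range_countIn_div A n)).1 hn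
  exact ⟨x, (lt_div_iff₀ (by exact_mod_cast hn0)).1 hx⟩

end BanachDensity

theorem card_filter_countIn_lt_le {B : Set ℕ} {α ε η : ℝ} {a k : ℕ} (hη : 0 ≤ η)
    (hwin : ∀ y, (countIn B y (y + k) : ℝ) ≤ (α + η) * (k + 1)) (x n : ℕ) :
    ε * #{m ∈ Icc x (x + n) | (countIn B (m + a) (m + a + k) : ℝ) < (α - ε) * (k + 1)} ≤
      (n + 1) * (α + η) + (a + k + 1) - countIn B x (x + n) := by
  have hmarkov := card_filter_lt_sub_mul_le (Icc x (x + n))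
    (fun m => (countIn B (m + a) (m + a + k) : ℝ)) (e := (ε + η) * (k + 1)) fun m _ => hwin (m + a)
  rw [show (α + η) * (k + 1) - (ε + η) * (k + 1) = (α - ε) * (k + 1) by ring, Nat.card_Icc,
    show x + n + 1 - x = n + 1 by omega] at hmarkov
  have hsum : ((k + 1) * countIn B x (x + n) : ℝ) ≤
      ∑ m ∈ Icc x (x + n), (countIn B (m + a) (m + a + k) : ℝ) + (k + 1) * (a + k + 1) := by
    exact_mod_cast mul_countIn_le_sum_countIn B x n a k
  set bad := #{m ∈ Icc x (x + n) | (countIn B (m + a) (m + a + k) : ℝ) < (α - ε) * (k + 1)}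
  have hk : (0 : ℝ) < k + 1 := by positivity
  have hbad : (k + 1) * ((ε + η) * bad) ≤
      (k + 1) * ((n + 1) * (α + η) + (a + k + 1) - countIn B x (x + n)) := by
    push_cast at hmarkov
    nlinarith
  have := le_of_mul_le_mul_left hbad hk
  nlinarith [(Nat.cast_nonneg bad : (0 : ℝ) ≤ bad)]

theorem card_biUnion_filter_countIn_lt_le {ι : Type*} (s : Finset ι) {B : Set ℕ} {α δ : ℝ}
    (a k : ι → ℕ) (ε η : ι → ℝ) (hε : ∀ j ∈ s, 0 < ε j) (hη : ∀ j ∈ s, 0 ≤ η j)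
    (hwin : ∀ j ∈ s, ∀ y, (countIn B y (y + k j) : ℝ) ≤ (α + η j) * (k j + 1)) {x n : ℕ}
    (hx : (α - δ) * n < countIn B x (x + n)) :
    (#(s.biUnion fun j => {m ∈ Icc x (x + n) |
      (countIn B (m + a j) (m + a j + k j) : ℝ) < (α - ε j) * (k j + 1)}) : ℝ) ≤
      ∑ j ∈ s, (n * (η j + δ) + (α + η j + a j + k j + 1)) / ε j := by
  refine (Nat.cast_le.2 card_biUnion_le).trans ?_
  push_cast
  refine sum_le_sum fun j hj => ?_
  rw [le_div_iff₀ (hε j hj), mul_comm]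
  linarith [card_filter_countIn_lt_le (a := a j) (ε := ε j) (hη j hj) (hwin j hj) x n]

theorem exists_mem_forall_le_countIn {ι : Type*} (s : Finset ι) {A : Set ℕ} {α : ℝ}
    (hα : banachDensity A = α) (a k : ι → ℕ) (ε η : ι → ℝ) (hε : ∀ j ∈ s, 0 < ε j)
    (hη : ∀ j ∈ s, 0 ≤ η j) (hsum : ∑ j ∈ s, η j / ε j < α)
    (hwin : ∀ j ∈ s, ∀ y, (countIn A y (y + k j) : ℝ) ≤ (α + η j) * (k j + 1)) (M : ℕ) :
    ∃ m ∈ A, M ≤ m ∧ ∀ j ∈ s, (α - ε j) * (k j + 1) ≤ countIn A (m + a j) (m + a j + k j) := by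
  subst hα
  set σ := ∑ j ∈ s, η j / ε j
  set τ := ∑ j ∈ s, 1 / ε j
  set D := ∑ j ∈ s, (banachDensity A + η j + a j + k j + 1) / ε j
  have hτ : 0 ≤ τ := sum_nonneg fun j hj => (one_div_pos.2 (hε j hj)).le
  set δ := (banachDensity A - σ) / (2 * (1 + τ))
  have hδ : 0 < δ := div_pos (sub_pos.2 hsum) (by positivity)
  have hδτ : δ * (1 + τ) = (banachDensity A - σ) / 2 := by
    have : (1 : ℝ) + τ ≠ 0 := by positivity
    simp only [δ]
    field_simp
  have hlarge : ∀ᶠ n : ℕ in atTop, M + D < (banachDensity A - σ) / 2 * n :=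
    (tendsto_natCast_atTop_atTop.const_mul_atTop (by linarith)).eventually_gt_atTop _
  obtain ⟨n, ⟨x, hx⟩, hn⟩ := ((frequently_lt_countIn A hδ).and_eventually hlarge).exists
  set bad := s.biUnion fun j => {m ∈ Icc x (x + n) |
    (countIn A (m + a j) (m + a j + k j) : ℝ) < (banachDensity A - ε j) * (k j + 1)}
  have hbad : (#bad : ℝ) ≤ n * σ + n * (δ * τ) + D :=
    (card_biUnion_filter_countIn_lt_le s a k ε η hε hη hwin hx).trans_eq <| by
      simp only [σ, τ, D, mul_sum, ← sum_add_distrib]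
      exact sum_congr rfl fun j hj => by field_simp [(hε j hj).ne']
  have hgood : (countIn A x (x + n) : ℝ) - M ≤ #{m ∈ Icc x (x + n) | m ∈ A ∧ M ≤ m} := by
    rw [sub_le_iff_le_add]
    exact_mod_cast countIn_le_card_filter_ge_add A x (x + n) M
  have hlt : #bad < #{m ∈ Icc x (x + n) | m ∈ A ∧ M ≤ m} := by
    have : (n : ℝ) * (δ * (1 + τ)) = n * ((banachDensity A - σ) / 2) := by rw [hδτ]
    exact_mod_cast (by nlinarith : (#bad : ℝ) < #{m ∈ Icc x (x + n) | m ∈ A ∧ M ≤ m})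
  obtain ⟨m, hm, hmbad⟩ := exists_mem_notMem_of_card_lt_card hlt
  obtain ⟨hmT, hmA, hMm⟩ := mem_filter.1 hm
  exact ⟨m, hmA, hMm, fun j hj => not_lt.1 fun h =>
    hmbad (mem_biUnion.2 ⟨j, hj, mem_filter.2 ⟨hmT, h⟩⟩)⟩

theorem exists_window_countIn_le (A : Set ℕ) {a b : ℕ → ℕ}
    (hlen : Tendsto (fun n => #(Icc (a n) (b n))) atTop atTop) {η : ℝ} (hη : 0 < η) (j : ℕ) :
    ∃ n ≥ j, ∃ k, b n = a n + k ∧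
      ∀ y, (countIn A y (y + k) : ℝ) ≤ (banachDensity A + η) * (k + 1) := by
  obtain ⟨n, ⟨hcard, hk⟩, hn⟩ := ((hlen.eventually (eventually_ge_atTop 1)).and
    (((tendsto_sub_atTop_nat 1).comp hlen).eventually (eventually_countIn_le A hη)) |>.and
    (eventually_ge_atTop j)).exists
  rw [Function.comp_apply, Nat.card_Icc] at hk
  rw [Nat.card_Icc] at hcard
  refine ⟨n, hn, b n - a n, by omega, fun y => ?_⟩
  have hk' := hk y
  rw [show b n + 1 - a n - 1 = b n - a n by omega] at hk'
  nlinarith [banachDensity_nonneg A]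

theorem le_countIn_of_eventually_le (p : Ultrafilter ℕ) {A : Set ℕ} {c : ℝ} {u k : ℕ}
    (h : ∀ᶠ m in p, c ≤ countIn A (m + u) (m + u + k)) :
    c ≤ countIn {x | {y | y + x ∈ A} ∈ p} u (u + k) := by
  have hshift : ∀ᶠ m in p, ∀ i ∈ Icc u (u + k), m + i ∈ A → {y | y + i ∈ A} ∈ p :=
    (eventually_all_finset _).2 fun i _ => by
      by_cases hi : {y | y + i ∈ A} ∈ p
      · exact Eventually.of_forall fun _ _ => hi
      · exact (Ultrafilter.eventually_not.2 hi).mono fun m hm h => absurd h hm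
  obtain ⟨m, hm, hmshift⟩ := (h.and hshift).exists
  rw [add_assoc, countIn_add_add] at hm
  refine hm.trans (Nat.cast_le.2 (card_le_card fun i hi => ?_))
  obtain ⟨hiI, hiA⟩ := mem_filter.1 hi
  exact mem_filter.2 ⟨hiI, hmshift i hiI hiA⟩

theorem exists_ultrafilter_forall_mem {α : Type*} {V : ℕ → Set α} (hV : Antitone V)
    (hne : ∀ r, (V r).Nonempty) : ∃ p : Ultrafilter α, ∀ r, V r ∈ p := by
  have : (⨅ r, 𝓟 (V r)).NeBot := iInf_neBot_of_directed'
    (monotone_principal.comp_antitone hV).directed_ge fun r => principal_neBot_iff.2 (hne r)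
  exact ⟨Ultrafilter.of _, fun r => Ultrafilter.of_le _ (mem_iInf_of_mem r (mem_principal_self _))⟩

theorem le_limsup_of_le_comp {u : ℕ → ℝ} {φ : ℕ → ℕ} {ε : ℕ → ℝ} {α : ℝ}
    (hu : IsBoundedUnder (· ≤ ·) atTop u) (hφ : Tendsto φ atTop atTop)
    (hε : Tendsto ε atTop (𝓝 0)) (h : ∀ j, α - ε j ≤ u (φ j)) : α ≤ limsup u atTop := by
  refine le_of_forall_pos_le_add fun e he => ?_
  have hfreq : ∃ᶠ n in atTop, α - e ≤ u n := hφ.frequently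
    ((hε.eventually (gt_mem_nhds he)).mono fun j hj => by linarith [h j]).frequently
  linarith [le_limsup_of_frequently_le hfreq hu]

theorem le_limsup_natCard_inter_Icc_div (L : Set ℕ) {a b n k : ℕ → ℕ} {α : ℝ} {ε : ℕ → ℝ}
    (hb : ∀ j, b (n j) = a (n j) + k j) (hn : Tendsto n atTop atTop)
    (hε : Tendsto ε atTop (𝓝 0))
    (hL : ∀ j, (α - ε j) * (k j + 1) ≤ countIn L (a (n j)) (a (n j) + k j)) :
    α ≤ limsup (fun i => (Nat.card ↥(L ∩ Set.Icc (a i) (b i)) : ℝ) / #(Icc (a i) (b i))) atTop := by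
  refine le_limsup_of_le_comp (isBoundedUnder_of ⟨1, fun i => div_le_one_of_le₀ ?_ (by positivity)⟩)
    hn hε fun j => ?_
  · rw [natCard_inter_Icc_eq_countIn]
    exact_mod_cast countIn_le_card L _ _
  · rw [natCard_inter_Icc_eq_countIn, hb, le_div_iff₀ (by simp), Nat.card_Icc,
      show a (n j) + k j + 1 - a (n j) = k j + 1 by omega, Nat.cast_add_one]
    exact hL j

theorem exists_L_of_intervals_general (A : Set ℕ) (α : ℝ) (hα : banachDensity A = α)
    (hpos : 0 < α) (a b : ℕ → ℕ)
    (hlen : Filter.Tendsto (fun n => (Finset.Icc (a n) (b n)).card)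
      Filter.atTop Filter.atTop) :
    ∃ L : Set ℕ,
      α ≤ Filter.atTop.limsup
        (fun n => (Nat.card ↥(L ∩ Set.Icc (a n) (b n)) : ℝ) / (Finset.Icc (a n) (b n)).card) ∧
      ∀ F : Finset ℕ, ↑F ⊆ L → (A ∩ ⋂ x ∈ F, {y : ℕ | y + x ∈ A}).Infinite := by
  obtain ⟨ε, hε, c, hεc, hc⟩ := posSumOfEncodable (half_pos hpos) ℕ
  have hsum : ∀ s : Finset ℕ, ∑ j ∈ s, ε j ^ 2 / ε j < α := fun s => by
    simp only [sq, mul_div_cancel_right₀ _ (hε _).ne']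
    linarith [sum_le_hasSum s (fun j _ => (hε j).le) hεc]
  choose n hn k hb hwin using fun j => exists_window_countIn_le A hlen (pow_pos (hε j) 2) j
  rw [hα] at hwin
  set V : ℕ → Set ℕ := fun r => {m | m ∈ A ∧ r ≤ m ∧ ∀ j ∈ range (r + 1),
    (α - ε j) * (k j + 1) ≤ countIn A (m + a (n j)) (m + a (n j) + k j)}
  have hV : Antitone V := fun r s hrs m ⟨hmA, hsm, hm⟩ =>
    ⟨hmA, hrs.trans hsm, fun j hj => hm j (range_subset_range.2 (by omega) hj)⟩
  obtain ⟨p, hp⟩ := exists_ultrafilter_forall_mem hV fun r =>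
    exists_mem_forall_le_countIn (range (r + 1)) hα (a ∘ n) k ε (ε · ^ 2) (fun j _ => hε j)
      (fun j _ => by positivity) (hsum _) (fun j _ => hwin j) r
  refine ⟨{x | {y | y + x ∈ A} ∈ p}, ?_, fun F hF => ?_⟩
  · exact le_limsup_natCard_inter_Icc_div _ hb (tendsto_atTop_mono hn tendsto_id)
      hεc.summable.tendsto_atTop_zero fun j => le_countIn_of_eventually_le p <|
        mem_of_superset (hp j) fun m hm => hm.2.2 j (self_mem_range_succ j)
  · have hS : A ∩ ⋂ x ∈ F, {y | y + x ∈ A} ∈ p :=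
      inter_mem (mem_of_superset (hp 0) fun m hm => hm.1)
        ((biInter_finset_mem F).2 fun x hx => hF hx)
    exact Set.infinite_of_forall_exists_gt fun r =>
      (nonempty_of_mem (inter_mem hS (hp (r + 1)))).imp fun m hm => ⟨hm.1, hm.2.2.1⟩

theorem exists_L_of_intervals (A : Set ℕ) (α : ℝ) (hα : banachDensity A = α)
    (hpos : 0 < α) (a b : ℕ → ℕ)
    (hlen : Filter.Tendsto (fun n => (Finset.Icc (a n) (b n)).card)
      Filter.atTop Filter.atTop)
    (hconv : Filter.Tendsto
      (fun n => (Nat.card ↥(A ∩ Set.Icc (a n) (b n)) : ℝ) / (Finset.Icc (a n) (b n)).card)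
      Filter.atTop (nhds α)) :
    ∃ L : Set ℕ,
      α ≤ Filter.atTop.limsup
        (fun n => (Nat.card ↥(L ∩ Set.Icc (a n) (b n)) : ℝ) / (Finset.Icc (a n) (b n)).card) ∧
      ∀ F : Finset ℕ, ↑F ⊆ L → (A ∩ ⋂ x ∈ F, {y : ℕ | y + x ∈ A}).Infinite :=
  exists_L_of_intervals_general A α hα hpos a b hlen
end

section
/- Let G be a countable amenable group and let A ⊆ G satisfy BD(A) > 0. Then for every ρ > 0 there is a finite subset Q of G such that BD(QA) > 1 − ρ, where QA := {qa : q ∈ Q, a ∈ A}. -/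
open Filter Pointwise

/-- `F` is a (left) Følner sequence for `G`: a sequence of nonempty finite subsets of `G`
such that `|gF_n △ F_n| / |F_n| → 0` for every `g ∈ G`. -/
def IsFolnerSeq {G : Type*} [Group G] [DecidableEq G] (F : ℕ → Finset G) : Prop :=
  (∀ n, (F n).Nonempty) ∧
    ∀ g : G, Filter.Tendsto
      (fun n => ((symmDiff (g • F n) (F n)).card : ℝ) / (F n).card)
      Filter.atTop (nhds 0)

/-- The density sequence `|A ∩ F_n| / |F_n|` of a set `A ⊆ G` along a sequence of
finite subsets of `G`. -/
noncomputable def folnerDensitySeq {G : Type*} [Group G] (A : Set G)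
    (F : ℕ → Finset G) : ℕ → ℝ :=
  fun n => (Nat.card ↥(A ∩ (F n : Set G)) : ℝ) / (F n).card

/-- The (upper) Banach density of `A ⊆ G`:
`BD(A) = sup { limsup_n |A ∩ F_n| / |F_n| : (F_n) a Følner sequence for G }`. -/
noncomputable def groupBanachDensity {G : Type*} [Group G] [DecidableEq G]
    (A : Set G) : ℝ :=
  sSup {x : ℝ | ∃ F : ℕ → Finset G, IsFolnerSeq F ∧
    x = Filter.atTop.limsup (folnerDensitySeq A F)}

/-!
Fix a Følner sequence along which `A` has positive upper density, and an ultrafilter `U` on its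
indices along which this density stays positive; let `D(B)` be the `U`-limit of the densities of
`B`. Let `c > 0` be the supremum of `D(RA)` over finite `R`, and choose `P` with
`D(PA) > (1 - ρ) c`. If `R ⊇ P` and `D(RA)` is close to `c`, then, since no fattening
`(gR ∪ R)A` has density above `c`, the set `gRA \ RA` has `U`-density close to `0`: the sets
`RA ∩ F_i` are almost invariant, and inside them `PA` has relative density close to
`D(PA) / D(RA) ≈ D(PA) / c > 1 - ρ`. A diagonal choice of such sets is a Følner sequence along
which `PA` has density above `1 - ρ`.
-/

open Finset Topology

section relDensity

variable {G : Type*}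

-- `relDensity B ∅ = 0` (division by zero), so the identities below need no nonemptiness
-- hypotheses; `folnerDensitySeq B F n` unfolds to `relDensity B (F n)`.
noncomputable def relDensity (B : Set G) (E : Finset G) : ℝ :=
  ((B ∩ E).ncard : ℝ) / #E

lemma relDensity_nonneg (B : Set G) (E : Finset G) : 0 ≤ relDensity B E := by
  unfold relDensity; positivity

lemma relDensity_le_one (B : Set G) (E : Finset G) : relDensity B E ≤ 1 := by
  have h := Set.ncard_le_ncard (Set.inter_subset_right : B ∩ E ⊆ E)
  rw [Set.ncard_coe_finset] at h
  exact div_le_one_of_le₀ (mod_cast h) (Nat.cast_nonneg _)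

lemma relDensity_mono {B C : Set G} (h : B ⊆ C) (E : Finset G) :
    relDensity B E ≤ relDensity C E :=
  div_le_div_of_nonneg_right
    (mod_cast Set.ncard_le_ncard (Set.inter_subset_inter_left (E : Set G) h)) (Nat.cast_nonneg _)

lemma relDensity_union (S T : Set G) (E : Finset G) :
    relDensity (T ∪ S) E = relDensity (T \ S) E + relDensity S E := by
  unfold relDensity
  rw [← add_div, ← Nat.cast_add, ← Set.ncard_union_eq (s := T \ S ∩ E) (t := S ∩ E)
      (Set.disjoint_sdiff_left.mono Set.inter_subset_left Set.inter_subset_left),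
    ← Set.union_inter_distrib_right, Set.sdiff_union_self]

lemma ncard_inter_eq_card_filter (S : Set G) [DecidablePred (· ∈ S)] (E : Finset G) :
    (S ∩ E).ncard = #{x ∈ E | x ∈ S} := by
  rw [← Set.ncard_coe_finset, coe_filter, Set.inter_comm]
  rfl

lemma relDensity_eq_card_filter (S : Set G) [DecidablePred (· ∈ S)] (E : Finset G) :
    relDensity S E = #{x ∈ E | x ∈ S} / #E := by
  rw [relDensity, ncard_inter_eq_card_filter]

lemma relDensity_filter {B S : Set G} [DecidablePred (· ∈ S)] (h : B ⊆ S) (E : Finset G) :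
    relDensity B {x ∈ E | x ∈ S} = relDensity B E / relDensity S E := by
  rcases E.eq_empty_or_nonempty with rfl | hE
  · simp [relDensity]
  unfold relDensity
  rw [div_div_div_cancel_right₀ (by positivity), ← ncard_inter_eq_card_filter, coe_filter]
  congr 3
  ext x
  simp only [Set.mem_inter_iff, Set.mem_ofPred_eq, mem_coe]
  have := @h x
  tauto

end relDensity

section ultraDensity

variable {G : Type*} {ι : Type*} (U : Ultrafilter ι) (F : ι → Finset G)

noncomputable def ultraDensity (B : Set G) : ℝ :=
  limUnder (U : Filter ι) fun i => relDensity B (F i)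

lemma tendsto_ultraDensity (B : Set G) :
    Tendsto (fun i => relDensity B (F i)) U (𝓝 (ultraDensity U F B)) := by
  refine tendsto_nhds_limUnder ?_
  have hmem : ∀ᶠ i in (U : Filter ι), relDensity B (F i) ∈ Set.Icc (0 : ℝ) 1 :=
    Eventually.of_forall fun i => ⟨relDensity_nonneg B (F i), relDensity_le_one B (F i)⟩
  obtain ⟨x, -, hx⟩ :=
    isCompact_Icc.ultrafilter_le_nhds (U.map fun i => relDensity B (F i)) (le_principal_iff.2 hmem)
  exact ⟨x, hx⟩

lemma ultraDensity_le_one (B : Set G) : ultraDensity U F B ≤ 1 :=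
  le_of_tendsto' (tendsto_ultraDensity U F B) fun i => relDensity_le_one B (F i)

lemma ultraDensity_mono {B C : Set G} (h : B ⊆ C) : ultraDensity U F B ≤ ultraDensity U F C :=
  le_of_tendsto_of_tendsto' (tendsto_ultraDensity U F B) (tendsto_ultraDensity U F C)
    fun i => relDensity_mono h (F i)

lemma tendsto_relDensity_filter {B S : Set G} [DecidablePred (· ∈ S)] (h : B ⊆ S)
    (hS : ultraDensity U F S ≠ 0) :
    Tendsto (fun i => relDensity B {x ∈ F i | x ∈ S}) U
      (𝓝 (ultraDensity U F B / ultraDensity U F S)) := by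
  simp_rw [relDensity_filter h]
  exact (tendsto_ultraDensity U F B).div (tendsto_ultraDensity U F S) hS

end ultraDensity

section Group

variable {G : Type*} [Group G]

lemma card_smul_symmDiff_filter_le [DecidableEq G] (g : G) (S : Set G) [DecidablePred (· ∈ S)]
    (F : Finset G) :
    #(symmDiff (g • {x ∈ F | x ∈ S}) {x ∈ F | x ∈ S}) ≤
      2 * (((g • S \ S) ∩ F).ncard + #(symmDiff (g • F) F)) := by
  set E := {x ∈ F | x ∈ S}
  -- `g • E` and `E` have the same size, so both halves of the symmetric difference do too.
  have hsymm : #(symmDiff (g • E) E) ≤ #(g • E \ E) + #(E \ g • E) := card_union_le _ _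
  have hcomm : #(E \ g • E) = #(g • E \ E) := card_sdiff_comm (card_smul_finset g E).symm
  have hsub :
      (↑(g • E \ E) : Set G) ⊆ ((g • S \ S) ∩ F) ∪ ↑(symmDiff (g • F) F) := by
    intro y hy
    simp only [E, coe_sdiff, Set.mem_sdiff, mem_coe, ← inv_smul_mem_iff, mem_filter,
      Set.mem_union, Set.mem_inter_iff, Set.mem_smul_set_iff_inv_smul_mem, mem_symmDiff] at hy ⊢
    tauto
  have := (Set.ncard_le_ncard hsub).trans (Set.ncard_union_le _ _)
  rw [Set.ncard_coe_finset, Set.ncard_coe_finset] at this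
  omega

lemma card_smul_symmDiff_filter_div_le [DecidableEq G] (g : G) (S : Set G)
    [DecidablePred (· ∈ S)] (F : Finset G) :
    (#(symmDiff (g • {x ∈ F | x ∈ S}) {x ∈ F | x ∈ S}) : ℝ) / #{x ∈ F | x ∈ S} ≤
      (2 * (relDensity (g • S ∪ S) F - relDensity S F) +
        2 * (#(symmDiff (g • F) F) / #F)) / relDensity S F := by
  rcases eq_or_ne #{x ∈ F | x ∈ S} 0 with hE | hE
  · simp [hE, relDensity_eq_card_filter S]
  have hF : (#F : ℝ) ≠ 0 := by
    have := (Nat.pos_of_ne_zero hE).trans_le (card_filter_le F (· ∈ S))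
    positivity
  rw [relDensity_union, add_sub_cancel_right, relDensity, relDensity_eq_card_filter S]
  have key : (#(symmDiff (g • {x ∈ F | x ∈ S}) {x ∈ F | x ∈ S}) : ℝ) ≤
      2 * (((g • S \ S) ∩ F).ncard + #(symmDiff (g • F) F)) :=
    mod_cast card_smul_symmDiff_filter_le g S F
  refine (div_le_div_of_nonneg_right key (Nat.cast_nonneg _)).trans_eq ?_
  field_simp

end Group

lemma Monotone.exists_superset_of_isLUB {α : Type*} [DecidableEq α] {f : Finset α → ℝ}
    (hf : Monotone f) {c : ℝ} (hc : IsLUB (Set.range f) c) (P : Finset α) {p : ℝ → Prop}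
    (hp : ∀ᶠ t in 𝓝 c, p t) : ∃ R, P ⊆ R ∧ p (f R) := by
  have hlub : IsLUB (Set.range fun W => f (P ∪ W)) c := by
    refine ⟨?_, fun b hb => hc.2 ?_⟩
    · rintro _ ⟨W, rfl⟩
      exact hc.1 ⟨_, rfl⟩
    · rintro _ ⟨W, rfl⟩
      exact (hf subset_union_right).trans (hb ⟨W, rfl⟩)
  obtain ⟨_, ⟨W, rfl⟩, hW⟩ := ((hlub.frequently_mem (Set.range_nonempty _)).and_eventually
    (hp.filter_mono nhdsWithin_le_nhds)).exists
  exact ⟨P ∪ W, subset_union_left, hW⟩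

section Fattening

variable {G : Type*} [Group G] {ι : Type*} (U : Ultrafilter ι) (F : ι → Finset G)

lemma eventually_card_smul_symmDiff_filter_div_lt [DecidableEq G] {g : G}
    (hF : Tendsto (fun i => (#(symmDiff (g • F i) (F i)) : ℝ) / #(F i)) U (𝓝 0))
    {S : Set G} [DecidablePred (· ∈ S)] (hS : ultraDensity U F S ≠ 0) {ε : ℝ}
    (hε : 2 * (ultraDensity U F (g • S ∪ S) - ultraDensity U F S) / ultraDensity U F S < ε) :
    ∀ᶠ i in U, (#(symmDiff (g • {x ∈ F i | x ∈ S}) {x ∈ F i | x ∈ S}) : ℝ) /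
      #{x ∈ F i | x ∈ S} < ε := by
  have hlim := ((((tendsto_ultraDensity U F (g • S ∪ S)).sub
    (tendsto_ultraDensity U F S)).const_mul 2).add (hF.const_mul 2)).div
      (tendsto_ultraDensity U F S) hS
  rw [mul_zero, add_zero] at hlim
  filter_upwards [hlim.eventually_lt_const hε] with i hi
  exact (card_smul_symmDiff_filter_div_le g S (F i)).trans_lt hi

lemma monotone_ultraDensity_mul (A : Set G) :
    Monotone fun Q : Finset G => ultraDensity U F (Q * A) :=
  fun _ _ h => ultraDensity_mono U F (Set.mul_subset_mul_right (coe_subset.2 h))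

lemma exists_almost_invariant_dense [DecidableEq G]
    (hF : ∀ g : G, Tendsto (fun i => (#(symmDiff (g • F i) (F i)) : ℝ) / #(F i)) U (𝓝 0))
    {A : Set G} {c : ℝ} (hc : IsLUB (Set.range fun Q : Finset G => ultraDensity U F (Q * A)) c)
    (hc0 : 0 < c) (P K : Finset G) {ε : ℝ} (hε : 0 < ε) :
    ∃ E : Finset G, E.Nonempty ∧ (∀ g ∈ K, (#(symmDiff (g • E) E) : ℝ) / #E < ε) ∧
      ultraDensity U F (P * A) / c - ε < relDensity ((P : Set G) * A) E := by
  classical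
  set d := ultraDensity U F (P * A)
  -- For `t = D(RA)`, the last two conditions bound the invariance defect of `RA ∩ F_i` and the
  -- loss of relative density of `PA` inside it.
  have hnear : ∀ᶠ t in 𝓝 c, 0 < t ∧ 2 * (c - t) / t < ε ∧ d / c - ε < d / t := by
    refine (eventually_gt_nhds hc0).and (.and ?_ ?_)
    · refine ContinuousAt.eventually_lt (by fun_prop (disch := exact hc0.ne'))
        continuousAt_const ?_
      simpa using hε
    · exact continuousAt_const.eventually_lt (by fun_prop (disch := exact hc0.ne')) (by linarith)
  obtain ⟨R, hPR, ht0, htε, htd⟩ :=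
    (monotone_ultraDensity_mul U F A).exists_superset_of_isLUB hc P hnear
  set S := (R : Set G) * A
  have hinv : ∀ g ∈ K, ∀ᶠ i in U,
      (#(symmDiff (g • {x ∈ F i | x ∈ S}) {x ∈ F i | x ∈ S}) : ℝ) /
        #{x ∈ F i | x ∈ S} < ε := by
    intro g _
    refine eventually_card_smul_symmDiff_filter_div_lt U F (hF g) ht0.ne' (lt_of_le_of_lt ?_ htε)
    -- `g • S ∪ S` is itself a fattening of `A`, so its density is at most `c`.
    have hgS : g • S ∪ S = ((g • R ∪ R : Finset G) : Set G) * A := by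
      rw [coe_union, coe_smul_finset, Set.union_mul, smul_mul_assoc]
    rw [hgS]
    gcongr
    exact hc.1 ⟨_, rfl⟩
  have hne : ∀ᶠ i in U, ({x ∈ F i | x ∈ S} : Finset G).Nonempty := by
    filter_upwards [(tendsto_ultraDensity U F S).eventually_const_lt ht0] with i hi
    refine nonempty_iff_ne_empty.2 fun h => ?_
    simp [relDensity_eq_card_filter, h] at hi
  have hdense := (tendsto_relDensity_filter U F
    (Set.mul_subset_mul_right (coe_subset.2 hPR)) ht0.ne').eventually_const_lt htd
  obtain ⟨i, hi⟩ := (hne.and (((eventually_all_finset K).2 hinv).and hdense)).exists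
  exact ⟨_, hi.1, hi.2.1, hi.2.2⟩

end Fattening

section BanachDensity

variable {G : Type*} [Group G]

lemma limsup_folnerDensitySeq_le_one (B : Set G) (F : ℕ → Finset G) :
    atTop.limsup (folnerDensitySeq B F) ≤ 1 :=
  limsup_le_of_le (isCoboundedUnder_le_of_le atTop fun n => relDensity_nonneg B (F n))
    (Eventually.of_forall fun n => relDensity_le_one B (F n))

lemma exists_isFolnerSeq_pos_limsup [DecidableEq G] {A : Set G}
    (hA : 0 < groupBanachDensity A) :
    ∃ F : ℕ → Finset G, IsFolnerSeq F ∧ 0 < atTop.limsup (folnerDensitySeq A F) := by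
  by_contra! h
  exact hA.not_ge (Real.sSup_nonpos fun _ ⟨F, hF, hx⟩ => hx ▸ h F hF)

lemma le_groupBanachDensity_of_forall_exists [DecidableEq G] [Countable G] {B : Set G} {t : ℝ}
    (h : ∀ (K : Finset G) (ε : ℝ), 0 < ε → ∃ E : Finset G, E.Nonempty ∧
      (∀ g ∈ K, (#(symmDiff (g • E) E) : ℝ) / #E < ε) ∧ t - ε < relDensity B E) :
    t ≤ groupBanachDensity B := by
  obtain ⟨enum, henum⟩ := exists_surjective_nat G
  choose E hEne hEinv hEdens using fun j : ℕ =>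
    h ((range (j + 1)).image enum) (1 / (j + 1)) Nat.one_div_pos_of_nat
  have hE : IsFolnerSeq E := by
    refine ⟨hEne, fun g => ?_⟩
    obtain ⟨i, rfl⟩ := henum g
    refine squeeze_zero' (Eventually.of_forall fun j => by positivity) ?_
      tendsto_one_div_add_atTop_nhds_zero_nat
    filter_upwards [eventually_ge_atTop i] with j hij
    exact (hEinv j _ (mem_image_of_mem _ (mem_range.2 (by omega)))).le
  have hlim : Tendsto (fun j : ℕ => t - 1 / ((j : ℝ) + 1)) atTop (𝓝 t) := by
    simpa using tendsto_const_nhds.sub (tendsto_one_div_add_atTop_nhds_zero_nat (𝕜 := ℝ))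
  calc t = atTop.limsup fun j : ℕ => t - 1 / ((j : ℝ) + 1) := hlim.limsup_eq.symm
    _ ≤ atTop.limsup (folnerDensitySeq B E) :=
      limsup_le_limsup (Eventually.of_forall fun j => (hEdens j).le)
        hlim.isBoundedUnder_ge.isCoboundedUnder_le
        (isBoundedUnder_of ⟨1, fun j => relDensity_le_one B (E j)⟩)
    _ ≤ groupBanachDensity B :=
      le_csSup ⟨1, fun _ ⟨F, _, hx⟩ => hx ▸ limsup_folnerDensitySeq_le_one B F⟩
        ⟨E, hE, rfl⟩

lemma exists_ultrafilter_lt_ultraDensity {A : Set G} {F : ℕ → Finset G} {t : ℝ}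
    (h : t < atTop.limsup (folnerDensitySeq A F)) :
    ∃ U : Ultrafilter ℕ, (U : Filter ℕ) ≤ atTop ∧ t < ultraDensity U F A := by
  obtain ⟨s, hts, hs⟩ := exists_between h
  have hfreq : ∃ᶠ n in atTop, s < folnerDensitySeq A F n :=
    frequently_lt_of_lt_limsup
      (isCoboundedUnder_le_of_le atTop fun n => relDensity_nonneg A (F n)) hs
  have := frequently_iff_neBot.1 hfreq
  obtain ⟨U, hU⟩ := Ultrafilter.exists_le (atTop ⊓ 𝓟 {n | s < folnerDensitySeq A F n})
  refine ⟨U, hU.trans inf_le_left, hts.trans_le (ge_of_tendsto (tendsto_ultraDensity U F A) ?_)⟩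
  exact mem_of_superset (le_principal_iff.1 (hU.trans inf_le_right)) fun n (hn : s < _) => hn.le

end BanachDensity

theorem fattening_lemma_general {G : Type*} [Group G] [Countable G] [DecidableEq G]
    (A : Set G)
    (hA : 0 < groupBanachDensity A) :
    ∀ ρ : ℝ, 0 < ρ → ∃ Q : Finset G,
      groupBanachDensity ((Q : Set G) * A) > 1 - ρ := by
  intro ρ hρ
  obtain ⟨F, hF, hFA⟩ := exists_isFolnerSeq_pos_limsup hA
  obtain ⟨U, hU, hUA⟩ := exists_ultrafilter_lt_ultraDensity hFA
  set D := fun Q : Finset G => ultraDensity U F (Q * A)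
  have hbdd : BddAbove (Set.range D) :=
    ⟨1, by rintro _ ⟨Q, rfl⟩; exact ultraDensity_le_one U F _⟩
  have hc : 0 < ⨆ Q, D Q := hUA.trans_le <| by
    simpa [D] using le_ciSup hbdd {1}
  obtain ⟨P, hP⟩ := exists_lt_of_lt_ciSup (show (1 - ρ) * ⨆ Q, D Q < ⨆ Q, D Q by nlinarith)
  refine ⟨P, ((lt_div_iff₀ hc).2 hP).trans_le (le_groupBanachDensity_of_forall_exists
    fun K ε hε => exists_almost_invariant_dense U F (fun g => (hF.2 g).mono_left hU)
      (isLUB_ciSup hbdd) hc P K hε)⟩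

theorem fattening_lemma {G : Type*} [Group G] [Countable G] [DecidableEq G]
    (A : Set G) (hG : ∃ F : ℕ → Finset G, IsFolnerSeq F)
    (hA : 0 < groupBanachDensity A) :
    ∀ ρ : ℝ, 0 < ρ → ∃ Q : Finset G,
      groupBanachDensity ((Q : Set G) * A) > 1 - ρ :=
  fattening_lemma_general A hA
end

section
/- Let A ⊆ ℕ have upper density d̄(A) = α > 0 and suppose there is a strictly increasing sequence (b_k) of natural numbers such that: (i) b_k → ∞; (ii) lim_{k→∞} |A ∩ [1, b_k]|/b_k = α; (iii) for every i ∈ ℕ the limit L_i := lim_{k→∞} |A ∩ (A − i) ∩ [1, b_k]|/b_k exists, and lim_{n→∞} (1/n) Σ_{i=1}^{n} |L_i − α²| = 0. Then there exist infinite sets B, C ⊆ ℕ such that B + C ⊆ A. -/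
/-- The upper asymptotic density of `A ⊆ ℕ`: `d̄(A) = limsup_{n→∞} |A ∩ [1,n]| / n`. -/
noncomputable def upperDensity (A : Set ℕ) : ℝ :=
  Filter.atTop.limsup fun n : ℕ => (Nat.card ↥(A ∩ Set.Icc 1 n) : ℝ) / n

/-!
Given sets `U` and `V` of positive upper density along `b`, choose `K` elements `P ⊆ U` whose
pairwise differences `i` all satisfy `|L i - α²| < ε`: the Cesàro hypothesis makes the other
differences a set of density zero, so they can be avoided greedily. By the correlation
hypotheses, the number of `c ∈ P` with `v + c ∈ A` has, over `v ∈ [1, b k]`, mean `αK` and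
variance at most `εK² + K/4` in the limit. By Chebyshev most `v ∈ V` have at least `αK/2` such
`c`, and by pigeonhole some `c ∈ P` leaves `V ∩ (A - c)` of positive upper density along `b`.
Adding such elements alternately to `C` and to `B`, while the sets of common partners
`{v | B + v ⊆ A}` and `{v | C + v ⊆ A}` keep positive density, yields infinite `B` and `C`
with `B + C ⊆ A`.
-/

open Filter Finset
open scoped Topology

namespace PseudorandomBC

noncomputable def countIcc (S : Set ℕ) (m : ℕ) : ℕ := by
  classical exact #{x ∈ Icc 1 m | x ∈ S}

def shift (A : Set ℕ) (c : ℕ) : Set ℕ := {v | v + c ∈ A}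

theorem countIcc_eq_card_filter (S : Set ℕ) (m : ℕ) [DecidablePred (· ∈ S)] :
    countIcc S m = #{x ∈ Icc 1 m | x ∈ S} := by
  unfold countIcc; convert rfl

theorem natCard_inter_Icc (S : Set ℕ) (m : ℕ) :
    Nat.card ↥(S ∩ Set.Icc 1 m) = countIcc S m := by
  classical
  have h : S ∩ Set.Icc 1 m = ↑{x ∈ Icc 1 m | x ∈ S} := by ext; simp; tauto
  rw [h, Nat.card_coe_set_eq, Set.ncard_coe_finset, countIcc_eq_card_filter]

theorem countIcc_le (S : Set ℕ) (m : ℕ) : countIcc S m ≤ m := by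
  classical
  simpa [countIcc_eq_card_filter] using card_filter_le (Icc 1 m) (· ∈ S)

theorem countIcc_univ (m : ℕ) : countIcc Set.univ m = m := by
  classical
  simp [countIcc_eq_card_filter]

theorem countIcc_mono {S T : Set ℕ} (h : S ⊆ T) (m : ℕ) : countIcc S m ≤ countIcc T m := by
  classical
  simp only [countIcc_eq_card_filter]
  exact card_le_card (monotone_filter_right _ fun _ _ hx => h hx)

theorem countIcc_monotone (S : Set ℕ) : Monotone (countIcc S) := by
  classical
  intro m n hmn
  simp only [countIcc_eq_card_filter]
  exact card_le_card (filter_subset_filter _ (Icc_subset_Icc_right hmn))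

theorem countIcc_add (T : Set ℕ) (c m : ℕ) :
    countIcc T (c + m) = countIcc T c + countIcc (shift T c) m := by
  classical
  have hsplit : Icc 1 (c + m) = Icc 1 c ∪ (Icc 1 m).map (addRightEmbedding c) := by
    rw [map_add_right_Icc]; ext x; simp; omega
  have hdisj : Disjoint (Icc 1 c) ((Icc 1 m).map (addRightEmbedding c)) := by
    rw [map_add_right_Icc, disjoint_left]; intro x; simp; omega
  rw [countIcc_eq_card_filter, countIcc_eq_card_filter, countIcc_eq_card_filter, hsplit,
    filter_union, card_union_of_disjoint (disjoint_filter_filter hdisj), filter_map, card_map]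
  rfl

theorem countIcc_shift_le (T : Set ℕ) (c m : ℕ) :
    countIcc (shift T c) m ≤ countIcc T m + c := by
  have h1 := countIcc_add T c m
  have h2 := countIcc_add T m c
  have h3 := countIcc_le (shift T m) c
  rw [add_comm c m] at h1
  omega

theorem countIcc_le_shift (T : Set ℕ) (c m : ℕ) :
    countIcc T m ≤ countIcc (shift T c) m + c := by
  have h1 := countIcc_add T c m
  have h2 := countIcc_monotone T (Nat.le_add_left m c)
  have h3 := countIcc_le T c
  omega

theorem countIcc_union_le (S T : Set ℕ) (m : ℕ) :
    countIcc (S ∪ T) m ≤ countIcc S m + countIcc T m := by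
  classical
  simp only [countIcc_eq_card_filter, Set.mem_union, filter_or]
  exact card_union_le _ _

theorem countIcc_biUnion_le {ι : Type*} (s : Finset ι) (T : ι → Set ℕ) (m : ℕ) :
    countIcc (⋃ i ∈ s, T i) m ≤ ∑ i ∈ s, countIcc (T i) m := by
  classical
  induction s using Finset.induction_on with
  | empty => simp [countIcc_eq_card_filter]
  | insert i s hi ih =>
    rw [Finset.set_biUnion_insert, sum_insert hi]
    exact (countIcc_union_le _ _ m).trans (by omega)

theorem countIcc_setOf_le (M m : ℕ) : countIcc {v | v ≤ M} m ≤ M := by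
  classical
  rw [countIcc_eq_card_filter]
  calc #{x ∈ Icc 1 m | x ∈ {v | v ≤ M}} ≤ #(Icc 1 M) :=
        card_le_card fun x => by simp; omega
    _ = M := by simp

theorem countIcc_eq_sum_indicator (S : Set ℕ) (m : ℕ) :
    (countIcc S m : ℝ) = ∑ v ∈ Icc 1 m, S.indicator 1 v := by
  classical
  simp [countIcc_eq_card_filter, Set.indicator_apply]

theorem tendsto_countIcc_shift_div {b : ℕ → ℕ} (hb : Tendsto b atTop atTop) {T : Set ℕ}
    {l : ℝ} (h : Tendsto (fun k => (countIcc T (b k) : ℝ) / b k) atTop (𝓝 l)) (c : ℕ) :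
    Tendsto (fun k => (countIcc (shift T c) (b k) : ℝ) / b k) atTop (𝓝 l) := by
  have hc : Tendsto (fun k => (c : ℝ) / b k) atTop (𝓝 0) :=
    tendsto_const_nhds.div_atTop (tendsto_natCast_atTop_atTop.comp hb)
  have hlow := h.sub hc
  have hupp := h.add hc
  rw [sub_zero] at hlow
  rw [add_zero] at hupp
  refine tendsto_of_tendsto_of_tendsto_of_le_of_le hlow hupp (fun k => ?_) (fun k => ?_)
  · have := countIcc_le_shift T c (b k)
    dsimp only
    rw [← sub_div]
    gcongr
    exact sub_le_iff_le_add.2 (mod_cast this)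
  · have := countIcc_shift_le T c (b k)
    dsimp only
    rw [← add_div]
    gcongr
    exact_mod_cast this

theorem eventually_countIcc_le_of_tendsto_cesaro {f : ℕ → ℝ}
    (hf : Tendsto (fun n : ℕ => (1 / (n : ℝ)) * ∑ i ∈ Icc 1 n, |f i|) atTop (𝓝 0))
    {ε : ℝ} (hε : 0 < ε) {θ : ℝ} (hθ : 0 < θ) :
    ∀ᶠ n in atTop, (countIcc {i | ε ≤ |f i|} n : ℝ) ≤ θ * n := by
  filter_upwards [hf.eventually_lt_const (mul_pos hε hθ), eventually_gt_atTop 0] with n hn hn0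
  have hmarkov : ε * countIcc {i | ε ≤ |f i|} n ≤ ∑ i ∈ Icc 1 n, |f i| := by
    rw [countIcc_eq_sum_indicator, mul_sum]
    gcongr with i
    by_cases hi : ε ≤ |f i| <;> simp [hi]
  rw [one_div, inv_mul_lt_iff₀ (by exact_mod_cast hn0)] at hn
  nlinarith

theorem countIcc_le_countIcc_avoiding_add (S Bad : Set ℕ) (Q : Finset ℕ) {M : ℕ}
    (hQ : ∀ p ∈ Q, p ≤ M) (n : ℕ) :
    countIcc S n ≤ countIcc (S ∩ {v | M < v ∧ ∀ p ∈ Q, v - p ∉ Bad}) n + (#Q + 1) * M +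
      #Q * countIcc Bad n := by
  set Good := S ∩ {v | M < v ∧ ∀ p ∈ Q, v - p ∉ Bad}
  have hcover : S ⊆ Good ∪ {v | v ≤ M} ∪ ⋃ p ∈ Q, {v | v - p ∈ Bad} := by
    intro v hv
    by_cases hvM : v ≤ M
    · exact Or.inl (Or.inr hvM)
    by_cases hgood : ∀ p ∈ Q, v - p ∉ Bad
    · exact Or.inl (Or.inl ⟨hv, not_le.1 hvM, hgood⟩)
    push Not at hgood
    obtain ⟨p, hp, hvp⟩ := hgood
    exact Or.inr (Set.mem_biUnion hp hvp)
  have hshift : ∀ p ∈ Q, countIcc {v | v - p ∈ Bad} n ≤ countIcc Bad n + M := fun p hp =>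
    (countIcc_le_shift _ p n).trans (by simpa [shift] using hQ p hp)
  calc countIcc S n
      ≤ countIcc Good n + countIcc {v | v ≤ M} n +
          ∑ p ∈ Q, countIcc {v | v - p ∈ Bad} n :=
        (countIcc_mono hcover n).trans <| (countIcc_union_le _ _ n).trans <| add_le_add
          (countIcc_union_le _ _ n) (countIcc_biUnion_le _ _ n)
    _ ≤ countIcc Good n + M + ∑ _p ∈ Q, (countIcc Bad n + M) := by
        gcongr with p hp
        exacts [countIcc_setOf_le M n, hshift p hp]
    _ = countIcc Good n + (#Q + 1) * M + #Q * countIcc Bad n := by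
        rw [sum_const, smul_eq_mul]; ring

section Greedy

variable {b : ℕ → ℕ} {Bad S : Set ℕ} {γ : ℝ}

theorem exists_mem_forall_sub_notMem (hb : Tendsto b atTop atTop)
    (hBad : ∀ θ > 0, ∀ᶠ n in atTop, (countIcc Bad n : ℝ) ≤ θ * n) (hγ : 0 < γ)
    (hS : ∃ᶠ k in atTop, γ * b k ≤ countIcc S (b k)) (Q : Finset ℕ) {M : ℕ}
    (hQ : ∀ p ∈ Q, p ≤ M) : ∃ x ∈ S, M < x ∧ ∀ p ∈ Q, x - p ∉ Bad := by
  have hM : ∀ᶠ k in atTop, ((#Q + 1) * M : ℝ) < γ / 2 * b k :=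
    (((tendsto_natCast_atTop_atTop (R := ℝ)).comp hb).const_mul_atTop
      (half_pos hγ)).eventually_gt_atTop _
  have hB : ∀ᶠ k in atTop, ((#Q : ℝ) + 1) * countIcc Bad (b k) ≤ γ / 2 * b k := by
    filter_upwards [hb.eventually (hBad (γ / (2 * (#Q + 1))) (by positivity))] with k hk
    calc ((#Q : ℝ) + 1) * countIcc Bad (b k) ≤ (#Q + 1) * (γ / (2 * (#Q + 1)) * b k) := by
          gcongr
      _ = γ / 2 * b k := by field_simp
  obtain ⟨k, hkS, hkM, hkB⟩ := (hS.and_eventually (hM.and hB)).exists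
  have hpos : 0 < countIcc (S ∩ {v | M < v ∧ ∀ p ∈ Q, v - p ∉ Bad}) (b k) := by
    have hle := countIcc_le_countIcc_avoiding_add S Bad Q hQ (b k)
    by_contra h0
    have : (countIcc S (b k) : ℝ) ≤ (#Q + 1) * M + #Q * countIcc Bad (b k) := by
      exact_mod_cast (show countIcc S (b k) ≤ (#Q + 1) * M + #Q * countIcc Bad (b k) by omega)
    have : (0 : ℝ) ≤ countIcc Bad (b k) := Nat.cast_nonneg _
    linarith
  classical
  rw [countIcc_eq_card_filter, card_pos] at hpos
  obtain ⟨x, hx⟩ := hpos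
  simp only [mem_filter, Set.mem_inter_iff] at hx
  exact ⟨x, hx.2.1, hx.2.2⟩

theorem exists_finset_pairwise_dist_notMem (hb : Tendsto b atTop atTop)
    (hBad : ∀ θ > 0, ∀ᶠ n in atTop, (countIcc Bad n : ℝ) ≤ θ * n) (hγ : 0 < γ)
    (hS : ∃ᶠ k in atTop, γ * b k ≤ countIcc S (b k)) (K M : ℕ) :
    ∃ P : Finset ℕ, #P = K ∧ ↑P ⊆ S ∧ (∀ p ∈ P, M < p) ∧
      (P : Set ℕ).Pairwise fun p q => Nat.dist p q ∉ Bad := by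
  induction K with
  | zero => exact ⟨∅, by simp⟩
  | succ K ih =>
    obtain ⟨P, hcard, hPS, hPM, hPdist⟩ := ih
    obtain ⟨x, hxS, hxM, hxP⟩ := exists_mem_forall_sub_notMem hb hBad hγ hS P
      (M := max M (P.sup id)) fun p hp => le_max_of_le_right (le_sup (f := id) hp)
    have hlt : ∀ p ∈ P, p < x := fun p hp =>
      (le_max_of_le_right (le_sup (f := id) hp)).trans_lt hxM
    refine ⟨insert x P, ?_, ?_, ?_, ?_⟩
    · rw [card_insert_of_notMem fun hx => (hlt x hx).false, hcard]
    · rw [coe_insert]; exact Set.insert_subset hxS hPS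
    · simpa using ⟨(le_max_left _ _).trans_lt hxM, hPM⟩
    · rw [coe_insert, Set.pairwise_insert]
      refine ⟨hPdist, fun p hp _ => ?_⟩
      have hxp : Nat.dist x p ∉ Bad := by
        rw [Nat.dist_eq_sub_of_le_right (hlt p hp).le]
        exact hxP p hp
      exact ⟨hxp, by rwa [Nat.dist_comm]⟩

end Greedy

noncomputable def hitCount (A : Set ℕ) (P : Finset ℕ) (v : ℕ) : ℝ :=
  ∑ c ∈ P, (shift A c).indicator 1 v

theorem hitCount_nonneg (A : Set ℕ) (P : Finset ℕ) (v : ℕ) : 0 ≤ hitCount A P v :=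
  sum_nonneg fun _ _ => Set.indicator_nonneg (fun _ _ => zero_le_one) _

theorem sum_sq_hitCount_sub (A : Set ℕ) (α : ℝ) (P : Finset ℕ) (m : ℕ) :
    ∑ v ∈ Icc 1 m, (hitCount A P v - α * #P) ^ 2 =
      ∑ c ∈ P, ∑ c' ∈ P, ((countIcc (shift A c ∩ shift A c') m : ℝ) -
        α * countIcc (shift A c) m - α * countIcc (shift A c') m + α ^ 2 * m) := by
  have hpt : ∀ v, (hitCount A P v - α * #P) ^ 2 = ∑ c ∈ P, ∑ c' ∈ P,
      ((shift A c ∩ shift A c').indicator 1 v - α * (shift A c).indicator 1 v -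
        α * (shift A c').indicator 1 v + α ^ 2) := by
    intro v
    have hcentre : hitCount A P v - α * #P = ∑ c ∈ P, ((shift A c).indicator 1 v - α) := by
      rw [sum_sub_distrib, sum_const, nsmul_eq_mul, mul_comm, hitCount]
    rw [hcentre, sq, sum_mul_sum]
    refine sum_congr rfl fun c _ => sum_congr rfl fun c' _ => ?_
    rw [Set.inter_indicator_one, Pi.mul_apply]
    ring
  simp only [hpt, countIcc_eq_sum_indicator]
  rw [sum_comm]
  refine sum_congr rfl fun c _ => ?_
  rw [sum_comm]
  refine sum_congr rfl fun c' _ => ?_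
  simp only [sum_add_distrib, sum_sub_distrib, ← mul_sum, sum_const, Nat.card_Icc,
    nsmul_eq_mul, add_tsub_cancel_right]
  ring

theorem countIcc_lowHits_mul_le (A : Set ℕ) {α : ℝ} (hα : 0 ≤ α) (P : Finset ℕ)
    (m : ℕ) :
    (countIcc {v | hitCount A P v < α * #P / 2} m : ℝ) * (α * #P / 2) ^ 2 ≤
      ∑ v ∈ Icc 1 m, (hitCount A P v - α * #P) ^ 2 := by
  rw [countIcc_eq_sum_indicator, sum_mul]
  gcongr with v
  by_cases hv : hitCount A P v < α * #P / 2
  · simp only [Set.indicator_of_mem (show v ∈ {v | hitCount A P v < α * #P / 2} from hv),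
      Pi.one_apply, one_mul]
    have : (0 : ℝ) ≤ α * #P / 2 := by positivity
    nlinarith [hitCount_nonneg A P v]
  · simp only [Set.indicator_of_notMem (show v ∉ {v | hitCount A P v < α * #P / 2} from hv),
      zero_mul]
    positivity

theorem mul_sub_countIcc_lowHits_le (A V : Set ℕ) (P : Finset ℕ) (t : ℝ) (m : ℕ) :
    t * ((countIcc V m : ℝ) - countIcc {v | hitCount A P v < t} m) ≤
      ∑ c ∈ P, (countIcc (V ∩ shift A c) m : ℝ) := by
  have hswap : ∑ c ∈ P, (countIcc (V ∩ shift A c) m : ℝ) =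
      ∑ v ∈ Icc 1 m, V.indicator 1 v * hitCount A P v := by
    simp only [countIcc_eq_sum_indicator, Set.inter_indicator_one, Pi.mul_apply, hitCount,
      mul_sum]
    exact sum_comm
  rw [hswap, countIcc_eq_sum_indicator, countIcc_eq_sum_indicator, ← sum_sub_distrib, mul_sum]
  refine sum_le_sum fun v _ => ?_
  have h0 := hitCount_nonneg A P v
  classical
  simp only [Set.indicator_apply, Set.mem_ofPred_eq, Pi.one_apply]
  split_ifs <;> linarith

theorem exists_frequently_le_of_card_mul_le_sum {ι β : Type*} {l : Filter β} {s : Finset ι}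
    (hs : s.Nonempty) {f : ι → β → ℝ} {g : β → ℝ}
    (h : ∃ᶠ x in l, #s * g x ≤ ∑ i ∈ s, f i x) :
    ∃ i ∈ s, ∃ᶠ x in l, g x ≤ f i x := by
  by_contra hcon
  push Not at hcon
  have hall : ∀ᶠ x in l, ∀ i ∈ s, f i x < g x :=
    (eventually_all_finset s).2 fun i hi => (hcon i hi).mono fun _ hx => hx
  obtain ⟨x, hx, hlt⟩ := (h.and_eventually hall).exists
  have := sum_lt_sum_of_nonempty hs hlt
  rw [sum_const, nsmul_eq_mul] at this
  linarith

-- The limiting density of `shift A c ∩ shift A c'` along `b`.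
noncomputable def pairCorr (α : ℝ) (L : ℕ → ℝ) (c c' : ℕ) : ℝ :=
  if c = c' then α else L (Nat.dist c c')

theorem pairCorr_comm (α : ℝ) (L : ℕ → ℝ) (c c' : ℕ) :
    pairCorr α L c c' = pairCorr α L c' c := by
  simp only [pairCorr, eq_comm, Nat.dist_comm]

theorem sum_pairCorr_sub_sq_le {α : ℝ} {L : ℕ → ℝ} {P : Finset ℕ} {ε : ℝ}
    (hε : 0 ≤ ε) (hP : (P : Set ℕ).Pairwise fun p q => |L (Nat.dist p q) - α ^ 2| < ε) :
    ∑ c ∈ P, ∑ c' ∈ P, (pairCorr α L c c' - α ^ 2) ≤ ε * #P ^ 2 + #P / 4 := by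
  have hterm : ∀ c ∈ P, ∀ c' ∈ P,
      pairCorr α L c c' - α ^ 2 ≤ ε + if c = c' then 1 / 4 else 0 := by
    intro c hc c' hc'
    by_cases hcc : c = c'
    · simp only [pairCorr, if_pos hcc]
      nlinarith [sq_nonneg (α - 1 / 2)]
    · simp only [pairCorr, if_neg hcc, add_zero]
      exact (le_abs_self _).trans (hP hc hc' hcc).le
  calc ∑ c ∈ P, ∑ c' ∈ P, (pairCorr α L c c' - α ^ 2)
      ≤ ∑ c ∈ P, ∑ c' ∈ P, (ε + if c = c' then 1 / 4 else 0) :=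
        sum_le_sum fun c hc => sum_le_sum fun c' hc' => hterm c hc c' hc'
    _ = ε * #P ^ 2 + #P / 4 := by
        rw [sum_congr rfl fun c hc => by rw [sum_add_distrib, sum_ite_eq, if_pos hc]]
        simp only [sum_add_distrib, sum_const, nsmul_eq_mul]
        ring

def HasPosDensityAlong (b : ℕ → ℕ) (S : Set ℕ) : Prop :=
  ∃ γ > (0 : ℝ), ∃ᶠ k in atTop, γ * b k ≤ countIcc S (b k)

theorem hasPosDensityAlong_univ (b : ℕ → ℕ) : HasPosDensityAlong b Set.univ :=
  ⟨1, one_pos, Frequently.of_forall fun k => by simp [countIcc_univ]⟩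

structure IsPseudorandom (A : Set ℕ) (α : ℝ) (b : ℕ → ℕ) (L : ℕ → ℝ) : Prop where
  tendsto_atTop : Tendsto b atTop atTop
  tendsto_density : Tendsto (fun k => (countIcc A (b k) : ℝ) / b k) atTop (𝓝 α)
  tendsto_corr (i : ℕ) :
    Tendsto (fun k => (countIcc (A ∩ shift A i) (b k) : ℝ) / b k) atTop (𝓝 (L i))
  tendsto_cesaro : Tendsto (fun n : ℕ => (1 / (n : ℝ)) * ∑ i ∈ Icc 1 n, |L i - α ^ 2|)
    atTop (𝓝 0)

namespace IsPseudorandom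

variable {A : Set ℕ} {α : ℝ} {b : ℕ → ℕ} {L : ℕ → ℝ}

theorem tendsto_shift_density (h : IsPseudorandom A α b L) (c : ℕ) :
    Tendsto (fun k => (countIcc (shift A c) (b k) : ℝ) / b k) atTop (𝓝 α) :=
  tendsto_countIcc_shift_div h.tendsto_atTop h.tendsto_density c

theorem tendsto_pairCorr (h : IsPseudorandom A α b L) (c c' : ℕ) :
    Tendsto (fun k => (countIcc (shift A c ∩ shift A c') (b k) : ℝ) / b k) atTop
      (𝓝 (pairCorr α L c c')) := by
  wlog hcc : c ≤ c' generalizing c c'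
  · simpa only [Set.inter_comm, pairCorr_comm] using this c' c (le_of_not_ge hcc)
  rcases hcc.eq_or_lt with rfl | hlt
  · simpa [pairCorr] using h.tendsto_shift_density c
  have hinter : shift A c ∩ shift A c' = shift (A ∩ shift A (c' - c)) c := by
    ext v
    simp only [shift, Set.mem_inter_iff, Set.mem_ofPred_eq, add_assoc, Nat.add_sub_cancel' hlt.le]
  rw [hinter, pairCorr, if_neg hlt.ne, Nat.dist_eq_sub_of_le hlt.le]
  exact tendsto_countIcc_shift_div h.tendsto_atTop (h.tendsto_corr _) c

theorem tendsto_sum_sq_hitCount_sub_div (h : IsPseudorandom A α b L) (P : Finset ℕ) :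
    Tendsto (fun k => (∑ v ∈ Icc 1 (b k), (hitCount A P v - α * #P) ^ 2) / b k) atTop
      (𝓝 (∑ c ∈ P, ∑ c' ∈ P, (pairCorr α L c c' - α ^ 2))) := by
  have hnorm : ∀ᶠ k in atTop, ∑ c ∈ P, ∑ c' ∈ P,
      ((countIcc (shift A c ∩ shift A c') (b k) : ℝ) / b k -
        α * ((countIcc (shift A c) (b k) : ℝ) / b k) -
        α * ((countIcc (shift A c') (b k) : ℝ) / b k) + α ^ 2) =
      (∑ v ∈ Icc 1 (b k), (hitCount A P v - α * #P) ^ 2) / b k := by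
    filter_upwards [h.tendsto_atTop.eventually_gt_atTop 0] with k hk
    have hk' : (b k : ℝ) ≠ 0 := by positivity
    rw [sum_sq_hitCount_sub, sum_div]
    refine sum_congr rfl fun c _ => ?_
    rw [sum_div]
    refine sum_congr rfl fun c' _ => ?_
    field_simp
  refine Tendsto.congr' hnorm (tendsto_finsetSum _ fun c _ => tendsto_finsetSum _ fun c' _ => ?_)
  convert (((h.tendsto_pairCorr c c').sub ((h.tendsto_shift_density c).const_mul α)).sub
    ((h.tendsto_shift_density c').const_mul α)).add (tendsto_const_nhds (x := α ^ 2)) using 2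
  ring

theorem eventually_countIcc_lowHits_le (h : IsPseudorandom A α b L) (hα : 0 ≤ α)
    {P : Finset ℕ} {θ : ℝ}
    (hθ : ∑ c ∈ P, ∑ c' ∈ P, (pairCorr α L c c' - α ^ 2) < (α * #P / 2) ^ 2 * θ) :
    ∀ᶠ k in atTop, (countIcc {v | hitCount A P v < α * #P / 2} (b k) : ℝ) ≤ θ * b k := by
  filter_upwards [(h.tendsto_sum_sq_hitCount_sub_div P).eventually_lt_const hθ,
    h.tendsto_atTop.eventually_gt_atTop 0] with k hk hk0
  rw [div_lt_iff₀ (by positivity)] at hk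
  have hcheb := countIcc_lowHits_mul_le A hα P (b k)
  by_contra hlt
  have : θ * b k * (α * #P / 2) ^ 2 ≤ countIcc {v | hitCount A P v < α * #P / 2} (b k) *
      (α * #P / 2) ^ 2 := by gcongr; exact (not_le.1 hlt).le
  linarith

theorem exists_mem_hasPosDensityAlong_inter_shift (h : IsPseudorandom A α b L) (hα : 0 < α)
    {U V : Set ℕ} (hU : HasPosDensityAlong b U) (hV : HasPosDensityAlong b V) (M : ℕ) :
    ∃ c ∈ U, M < c ∧ HasPosDensityAlong b (V ∩ shift A c) := by
  obtain ⟨γU, hγU, hU⟩ := hU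
  obtain ⟨γ, hγ, hV⟩ := hV
  -- With `K > 4 / (α²γ)` and `ε = α²γ/16`, the variance bound `εK² + K/4` is below
  -- `(αK/2)² · γ/2`, so by Chebyshev at most `γ/2` of `[1, b k]` gets fewer than `αK/2` hits.
  obtain ⟨K, hK⟩ := exists_nat_gt (4 / (α ^ 2 * γ))
  have hK0 : (0 : ℝ) < K := lt_trans (by positivity) hK
  set ε := α ^ 2 * γ / 16 with hε
  have hBad :
      ∀ θ > 0, ∀ᶠ n in atTop, (countIcc {i | ε ≤ |L i - α ^ 2|} n : ℝ) ≤ θ * n := fun θ hθ =>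
    eventually_countIcc_le_of_tendsto_cesaro h.tendsto_cesaro (by positivity) hθ
  obtain ⟨P, hPcard, hPU, hPM, hPdist⟩ :=
    exists_finset_pairwise_dist_notMem h.tendsto_atTop hBad hγU hU K M
  have hPgood : (P : Set ℕ).Pairwise fun p q => |L (Nat.dist p q) - α ^ 2| < ε :=
    hPdist.imp fun _ _ hpq => not_le.1 hpq
  have hvar :
      ∑ c ∈ P, ∑ c' ∈ P, (pairCorr α L c c' - α ^ 2) < (α * #P / 2) ^ 2 * (γ / 2) := by
    refine (sum_pairCorr_sub_sq_le (by positivity) hPgood).trans_lt ?_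
    rw [hPcard, hε]
    rw [div_lt_iff₀ (by positivity)] at hK
    nlinarith
  have hfreq : ∃ᶠ k in atTop,
      (#P : ℝ) * (α * γ / 4 * b k) ≤
        ∑ c ∈ P, (countIcc (V ∩ shift A c) (b k) : ℝ) := by
    refine (hV.and_eventually (h.eventually_countIcc_lowHits_le hα.le hvar)).mono ?_
    rintro k ⟨hkV, hkE⟩
    refine le_trans ?_ (mul_sub_countIcc_lowHits_le A V P (α * #P / 2) (b k))
    have : (0 : ℝ) ≤ α * #P / 2 := by positivity
    nlinarith
  have hPne : P.Nonempty := card_pos.1 (by exact_mod_cast hPcard ▸ hK0)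
  obtain ⟨c, hcP, hc⟩ := exists_frequently_le_of_card_mul_le_sum hPne hfreq
  exact ⟨c, hPU hcP, hPM c hcP, α * γ / 4, by positivity, hc⟩

end IsPseudorandom

theorem exists_infinite_of_forall_exists_insert {R : ℕ → ℕ → Prop}
    {P : Finset ℕ → Finset ℕ → Prop} (h0 : P ∅ ∅)
    (hR : ∀ B C, P B C → ∀ x ∈ B, ∀ y ∈ C, R x y)
    (hext : ∀ B C, P B C → ∀ M, ∃ x > M, ∃ y > M, P (insert x B) (insert y C)) :
    ∃ B C : Set ℕ, B.Infinite ∧ C.Infinite ∧ ∀ x ∈ B, ∀ y ∈ C, R x y := by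
  choose! x hx y hy hP using hext
  -- Extending with `M = n` at stage `n` makes both unions unbounded.
  let seq : ℕ → Finset ℕ × Finset ℕ := fun n =>
    n.rec (∅, ∅) fun n s => (insert (x s.1 s.2 n) s.1, insert (y s.1 s.2 n) s.2)
  have hseq : ∀ n, P (seq n).1 (seq n).2 := fun n => by
    induction n with
    | zero => exact h0
    | succ n ih => exact hP _ _ ih n
  have hmono₁ : Monotone fun n => (seq n).1 :=
    monotone_nat_of_le_succ fun _ => subset_insert _ _
  have hmono₂ : Monotone fun n => (seq n).2 :=
    monotone_nat_of_le_succ fun _ => subset_insert _ _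
  refine ⟨⋃ n, ↑(seq n).1, ⋃ n, ↑(seq n).2, ?_, ?_, ?_⟩
  · refine Set.infinite_of_forall_exists_gt fun n => ⟨_, Set.mem_iUnion.2 ⟨n + 1, ?_⟩,
      hx _ _ (hseq n) n⟩
    exact mem_insert_self _ _
  · refine Set.infinite_of_forall_exists_gt fun n => ⟨_, Set.mem_iUnion.2 ⟨n + 1, ?_⟩,
      hy _ _ (hseq n) n⟩
    exact mem_insert_self _ _
  · simp only [Set.mem_iUnion, mem_coe]
    rintro a ⟨m, ha⟩ c ⟨n, hc⟩
    exact hR _ _ (hseq (max m n)) a (hmono₁ (le_max_left m n) ha) c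
      (hmono₂ (le_max_right m n) hc)

def partners (A : Set ℕ) (B : Finset ℕ) : Set ℕ := {v | ∀ x ∈ B, v + x ∈ A}

@[simp] theorem partners_empty (A : Set ℕ) : partners A ∅ = Set.univ := by
  simp [partners]

theorem partners_insert (A : Set ℕ) (B : Finset ℕ) (c : ℕ) :
    partners A (insert c B) = partners A B ∩ shift A c := by
  ext v
  simp [partners, shift, and_comm]

theorem IsPseudorandom.exists_infinite_add_mem {A : Set ℕ} {α : ℝ} {b : ℕ → ℕ}
    {L : ℕ → ℝ} (h : IsPseudorandom A α b L) (hα : 0 < α) :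
    ∃ B C : Set ℕ, B.Infinite ∧ C.Infinite ∧ ∀ x ∈ B, ∀ y ∈ C, x + y ∈ A := by
  refine exists_infinite_of_forall_exists_insert
    (P := fun B C => (∀ x ∈ B, ∀ y ∈ C, x + y ∈ A) ∧
      HasPosDensityAlong b (partners A B) ∧ HasPosDensityAlong b (partners A C))
    ⟨by simp, by simpa using hasPosDensityAlong_univ b,
      by simpa using hasPosDensityAlong_univ b⟩
    (fun _ _ hBC => hBC.1) ?_
  rintro B C ⟨hBC, hB, hC⟩ M
  obtain ⟨y, hyB, hyM, hCy⟩ := h.exists_mem_hasPosDensityAlong_inter_shift hα hB hC M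
  rw [← partners_insert] at hCy
  obtain ⟨x, hxC, hxM, hBx⟩ := h.exists_mem_hasPosDensityAlong_inter_shift hα hCy hB M
  rw [← partners_insert] at hBx
  refine ⟨x, hxM, y, hyM, ?_, hBx, hCy⟩
  intro x' hx' y' hy'
  rcases mem_insert.1 hx' with rfl | hx'
  · exact hxC y' hy'
  rcases mem_insert.1 hy' with rfl | hy'
  · exact add_comm y' x' ▸ hyB x' hx'
  · exact hBC x' hx' y' hy'

end PseudorandomBC


theorem pseudorandom_BC_general (A : Set ℕ) (α : ℝ) (hpos : 0 < α)
    (b : ℕ → ℕ)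
    (hb : Filter.Tendsto b Filter.atTop Filter.atTop)
    (hdens : Filter.Tendsto (fun k => (Nat.card ↥(A ∩ Set.Icc 1 (b k)) : ℝ) / (b k))
      Filter.atTop (nhds α))
    (L : ℕ → ℝ)
    (hL : ∀ i : ℕ, Filter.Tendsto
      (fun k => (Nat.card ↥(A ∩ {a : ℕ | a + i ∈ A} ∩ Set.Icc 1 (b k)) : ℝ) / (b k))
      Filter.atTop (nhds (L i)))
    (hmix : Filter.Tendsto
      (fun n : ℕ => (1 / (n : ℝ)) * ∑ i ∈ Finset.Icc 1 n, |L i - α ^ 2|)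
      Filter.atTop (nhds 0)) :
    ∃ B C : Set ℕ, B.Infinite ∧ C.Infinite ∧ ∀ x ∈ B, ∀ y ∈ C, x + y ∈ A := by
  simp only [PseudorandomBC.natCard_inter_Icc] at hdens hL
  exact PseudorandomBC.IsPseudorandom.exists_infinite_add_mem ⟨hb, hdens, hL, hmix⟩ hpos

theorem pseudorandom_BC (A : Set ℕ) (α : ℝ) (hα : upperDensity A = α) (hpos : 0 < α)
    (b : ℕ → ℕ) (hmono : StrictMono b)
    (hb : Filter.Tendsto b Filter.atTop Filter.atTop)
    (hdens : Filter.Tendsto (fun k => (Nat.card ↥(A ∩ Set.Icc 1 (b k)) : ℝ) / (b k))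
      Filter.atTop (nhds α))
    (L : ℕ → ℝ)
    (hL : ∀ i : ℕ, Filter.Tendsto
      (fun k => (Nat.card ↥(A ∩ {a : ℕ | a + i ∈ A} ∩ Set.Icc 1 (b k)) : ℝ) / (b k))
      Filter.atTop (nhds (L i)))
    (hmix : Filter.Tendsto
      (fun n : ℕ => (1 / (n : ℝ)) * ∑ i ∈ Finset.Icc 1 n, |L i - α ^ 2|)
      Filter.atTop (nhds 0)) :
    ∃ B C : Set ℕ, B.Infinite ∧ C.Infinite ∧ ∀ x ∈ B, ∀ y ∈ C, x + y ∈ A :=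
  pseudorandom_BC_general A α hpos b hb hdens L hL hmix
end

section
/- Let A ⊆ ℕ have positive upper density, d̄(A) > 0. Then there is a set L ⊆ ℕ such that the lower density of L equals d̄(A), i.e. d̲(L) = d̄(A), and for every finite F ⊆ L one has d̄(⋂_{l∈F} (A − l)) > 0, where A − l := {a ∈ ℕ : a + l ∈ A}. -/
/-- The lower asymptotic density of `A ⊆ ℕ`: `d̲(A) = liminf_{n→∞} |A ∩ [1,n]| / n`. -/
noncomputable def lowerDensity (A : Set ℕ) : ℝ :=
  Filter.atTop.liminf fun n : ℕ => (Nat.card ↥(A ∩ Set.Icc 1 n) : ℝ) / n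

/-!
Pick points `n_i` such that `A - n_i` has relative density at least `θ_i → d̄(A)` on every
initial interval `[1, M]` with `M ≤ i`, and such that `n_i` lies in none of the sets
`⋂_{l∈F} (A - l)` of upper density zero with `F ⊆ [0, i]`. Such points exist because, by a greedy
covering of `[1, N]`, the points after which `A` is `θ`-dense carry upper density at least
`d̄(A) - θ`, so they cannot all lie in a finite union of null sets.

The limit `L₀` of the translates `A - n_i` along a free ultrafilter then has
`|L₀ ∩ [1, M]| ≥ d̄(A) M` for every `M`, and for finite `F ⊆ L₀` the point `n_i` lies in
`⋂_{l∈F} (A - l)` for ultrafilter-many `i`, which rules out that this set is null. Finally `L₀` is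
thinned to a subset whose counting function stays above `⌈d̄(A) n⌉` and meets it infinitely often.
-/

open Filter Set Topology
open scoped Classical

noncomputable def countIcc (S : Set ℕ) (n : ℕ) : ℕ := Nat.count (fun k => k + 1 ∈ S) n

lemma natCard_inter_Icc_one (S : Set ℕ) (n : ℕ) : Nat.card ↥(S ∩ Icc 1 n) = countIcc S n := by
  have : S ∩ Icc 1 n =
      ((Finset.range n).filter (fun k => k + 1 ∈ S)).map (addRightEmbedding 1) := by
    ext m
    cases m <;> simp [and_comm]
  rw [this, Nat.card_coe_set_eq, ncard_coe_finset, Finset.card_map, countIcc,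
    Nat.count_eq_card_filter_range]

lemma countIcc_le (S : Set ℕ) (n : ℕ) : countIcc S n ≤ n := Nat.count_le _

lemma countIcc_succ (S : Set ℕ) (n : ℕ) :
    countIcc S (n + 1) = countIcc S n + if n + 1 ∈ S then 1 else 0 :=
  Nat.count_succ _ n

lemma count_mem_le_countIcc_add_one (S : Set ℕ) (n : ℕ) :
    Nat.count (· ∈ S) n ≤ countIcc S n + 1 := by
  calc Nat.count (· ∈ S) n ≤ Nat.count (· ∈ S) (n + 1) := Nat.count_monotone _ n.le_succ
    _ ≤ countIcc S n + 1 := by rw [Nat.count_succ']; split_ifs <;> simp [countIcc]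

lemma upperDensity_eq_limsup (S : Set ℕ) :
    upperDensity S = limsup (fun n => (countIcc S n : ℝ) / n) atTop := by
  simp only [upperDensity, natCard_inter_Icc_one]

lemma lowerDensity_eq_liminf (S : Set ℕ) :
    lowerDensity S = liminf (fun n => (countIcc S n : ℝ) / n) atTop := by
  simp only [lowerDensity, natCard_inter_Icc_one]

lemma countIcc_div_nonneg (S : Set ℕ) (n : ℕ) : 0 ≤ (countIcc S n : ℝ) / n := by positivity

lemma countIcc_div_le_one (S : Set ℕ) (n : ℕ) : (countIcc S n : ℝ) / n ≤ 1 :=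
  div_le_one_of_le₀ (by exact_mod_cast countIcc_le S n) n.cast_nonneg

lemma tendsto_countIcc_div_of_upperDensity_nonpos {S : Set ℕ} (h : upperDensity S ≤ 0) :
    Tendsto (fun n => (countIcc S n : ℝ) / n) atTop (𝓝 0) := by
  rw [upperDensity_eq_limsup] at h
  refine tendsto_order.2 ⟨fun a ha => .of_forall fun n => ha.trans_le (countIcc_div_nonneg S n),
    fun b hb => eventually_lt_of_limsup_lt (h.trans_lt hb) ?_⟩
  exact isBoundedUnder_of ⟨1, countIcc_div_le_one S⟩

lemma countIcc_biUnion_le {ι : Type*} (s : Finset ι) (T : ι → Set ℕ) (n : ℕ) :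
    countIcc (⋃ i ∈ s, T i) n ≤ ∑ i ∈ s, countIcc (T i) n := by
  simp only [countIcc, Nat.count_eq_card_filter_range]
  refine (Finset.card_le_card ?_).trans Finset.card_biUnion_le
  intro k hk
  simp only [Finset.mem_filter, mem_iUnion] at hk
  obtain ⟨hk, i, hi, hkT⟩ := hk
  exact Finset.mem_biUnion.2 ⟨i, hi, Finset.mem_filter.2 ⟨hk, hkT⟩⟩

lemma tendsto_countIcc_biUnion_div {ι : Type*} (s : Finset ι) {T : ι → Set ℕ}
    (h : ∀ i ∈ s, Tendsto (fun n => (countIcc (T i) n : ℝ) / n) atTop (𝓝 0)) :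
    Tendsto (fun n => (countIcc (⋃ i ∈ s, T i) n : ℝ) / n) atTop (𝓝 0) := by
  have hsum := tendsto_finsetSum s h
  rw [Finset.sum_const_zero] at hsum
  refine tendsto_of_tendsto_of_tendsto_of_le_of_le tendsto_const_nhds hsum
    (countIcc_div_nonneg _) fun n => ?_
  rw [← Finset.sum_div, ← Nat.cast_sum]
  gcongr
  exact countIcc_biUnion_le s T n

def IsDenseAfter (A : Set ℕ) (θ : ℝ) (m n : ℕ) : Prop :=
  ∀ M ≤ m, θ * M ≤ countIcc {l | n + l ∈ A} M

lemma countIcc_translate_add (A : Set ℕ) (n a b : ℕ) :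
    countIcc {l | n + l ∈ A} (a + b) =
      countIcc {l | n + l ∈ A} a + countIcc {l | n + a + l ∈ A} b := by
  simp only [countIcc, Nat.count_add, mem_ofPred_eq, add_assoc]

lemma count_translate_add (p : ℕ → Prop) (n a b : ℕ) :
    Nat.count (fun k => p (n + k)) (a + b) =
      Nat.count (fun k => p (n + k)) a + Nat.count (fun k => p (n + a + k)) b := by
  simp only [Nat.count_add, add_assoc]

/-- Greedy covering: cut `(n, n + j]` into unit steps at the points after which `A` is `θ`-dense,
and into windows of length `≤ m` and density `< θ` at the other points. -/
lemma countIcc_le_count_isDenseAfter {A : Set ℕ} {θ : ℝ} (hθ : 0 ≤ θ) (m : ℕ) (j n : ℕ) :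
    (countIcc {l | n + l ∈ A} j : ℝ) ≤
      θ * j + Nat.count (fun k => IsDenseAfter A θ m (n + k)) j + m := by
  induction j using Nat.strong_induction_on generalizing n with
  | _ j ih =>
  obtain rfl | hj := Nat.eq_zero_or_pos j
  · simp [countIcc]
  by_cases hn : IsDenseAfter A θ m n
  · obtain ⟨j, rfl⟩ := Nat.exists_eq_add_of_le hj
    have hstep : (countIcc {l | n + l ∈ A} 1 : ℝ) ≤ 1 := by exact_mod_cast countIcc_le _ 1
    have hcount : Nat.count (fun k => IsDenseAfter A θ m (n + k)) 1 = 1 := by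
      simp [Nat.count_one, hn]
    have := ih j (by omega) (n + 1)
    rw [countIcc_translate_add, count_translate_add, hcount]
    push_cast
    linarith
  · obtain ⟨M, hMm, hM⟩ : ∃ M ≤ m, (countIcc {l | n + l ∈ A} M : ℝ) < θ * M := by
      simpa [IsDenseAfter] using hn
    have hM0 : 0 < M := Nat.pos_of_ne_zero (by rintro rfl; simp [countIcc] at hM)
    rcases le_or_gt j M with hjM | hMj
    · have : (countIcc {l | n + l ∈ A} j : ℝ) ≤ m := by
        exact_mod_cast (countIcc_le _ j).trans (hjM.trans hMm)
      have : (0 : ℝ) ≤ θ * j := by positivity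
      linarith [(Nat.count (fun k => IsDenseAfter A θ m (n + k)) j).cast_nonneg (α := ℝ)]
    · obtain ⟨j, rfl⟩ := Nat.exists_eq_add_of_le hMj.le
      have := ih j (by omega) (n + M)
      rw [countIcc_translate_add, count_translate_add]
      push_cast
      linarith [(Nat.count (fun k => IsDenseAfter A θ m (n + k)) M).cast_nonneg (α := ℝ)]

lemma exists_isDenseAfter_notMem {A B : Set ℕ} {θ : ℝ} (hθ : 0 ≤ θ) (hθA : θ < upperDensity A)
    (hB : Tendsto (fun n => (countIcc B n : ℝ) / n) atTop (𝓝 0)) (m : ℕ) :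
    ∃ n ∉ B, IsDenseAfter A θ m n := by
  by_contra! h
  have hbound (N : ℕ) :
      (countIcc A N : ℝ) / N ≤ θ + (countIcc B N : ℝ) / N + (m + 1 : ℝ) / N := by
    rcases N.eq_zero_or_pos with rfl | hN
    · simpa using hθ
    have hcover := countIcc_le_count_isDenseAfter (A := A) hθ m N 0
    simp only [zero_add, ofPred_mem_eq] at hcover
    have hdense : (Nat.count (IsDenseAfter A θ m) N : ℝ) ≤ countIcc B N + 1 := by
      exact_mod_cast (Nat.count_mono_left fun k _ hk => by_contra fun hkB => h k hkB hk).trans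
        (count_mem_le_countIcc_add_one B N)
    calc (countIcc A N : ℝ) / N ≤ (θ * N + countIcc B N + (m + 1)) / N := by
          gcongr
          linarith
      _ = θ + (countIcc B N : ℝ) / N + (m + 1 : ℝ) / N := by field_simp
  have hlim : Tendsto (fun N : ℕ => θ + (countIcc B N : ℝ) / N + (m + 1 : ℝ) / N) atTop (𝓝 θ) := by
    simpa using (tendsto_const_nhds.add hB).add (tendsto_const_div_atTop_nhds_zero_nat _)
  have : upperDensity A ≤ θ := by
    rw [upperDensity_eq_limsup, ← hlim.limsup_eq]
    exact limsup_le_limsup (.of_forall hbound)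
      (isCoboundedUnder_le_of_le atTop (countIcc_div_nonneg A)) hlim.isBoundedUnder_le
  linarith

lemma exists_seq_isDenseAfter {A : Set ℕ} {θ : ℕ → ℝ} (hθ0 : ∀ i, 0 ≤ θ i)
    (hθA : ∀ i, θ i < upperDensity A) :
    ∃ ns : ℕ → ℕ, (∀ i, IsDenseAfter A (θ i) i (ns i)) ∧
      ∀ F : Finset ℕ, upperDensity (⋂ l ∈ F, {a | a + l ∈ A}) ≤ 0 →
        ∀ᶠ i in atTop, ns i ∉ ⋂ l ∈ F, {a | a + l ∈ A} := by
  let IsNull (F : Finset ℕ) : Prop := upperDensity (⋂ l ∈ F, {a | a + l ∈ A}) ≤ 0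
  -- at stage `i`, avoid the null sets `⋂ l ∈ F, (A - l)` with `F ⊆ [0, i]`
  have hex (i : ℕ) := exists_isDenseAfter_notMem (hθ0 i) (hθA i)
    (tendsto_countIcc_biUnion_div ((Finset.range (i + 1)).powerset.filter IsNull)
      fun F hF => tendsto_countIcc_div_of_upperDensity_nonpos (Finset.mem_filter.1 hF).2) i
  choose ns hns_avoid hns_dense using hex
  refine ⟨ns, hns_dense, fun F hF => ?_⟩
  obtain ⟨n, hn⟩ := F.exists_nat_subset_range
  filter_upwards [eventually_ge_atTop n] with i hi hmem
  have hF' : F ∈ (Finset.range (i + 1)).powerset.filter IsNull := Finset.mem_filter.2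
    ⟨Finset.mem_powerset.2 (hn.trans (Finset.range_subset_range.2 (by omega))), hF⟩
  exact hns_avoid i (mem_biUnion hF' hmem)

lemma le_countIcc_ultrafilter_limit {A : Set ℕ} {U : Ultrafilter ℕ} (hU : (U : Filter ℕ) ≤ atTop)
    {θ : ℕ → ℝ} {δ : ℝ} (hθ : Tendsto θ atTop (𝓝 δ)) {ns : ℕ → ℕ}
    (hns : ∀ i, IsDenseAfter A (θ i) i (ns i)) (M : ℕ) :
    δ * M ≤ countIcc {l | ∀ᶠ i in U, ns i + l ∈ A} M := by
  set L₀ := {l | ∀ᶠ i in U, ns i + l ∈ A}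
  have hagree : ∀ᶠ i in U, ∀ k ∈ Finset.range M, (k + 1 ∈ L₀ ↔ ns i + (k + 1) ∈ A) := by
    rw [eventually_all_finset]
    intro k _
    by_cases hk : k + 1 ∈ L₀
    · exact hk.mono fun i hi => iff_of_true hk hi
    · exact (Ultrafilter.eventually_not.2 hk).mono fun i hi => iff_of_false hk hi
  have hdense : ∀ᶠ i in U, θ i * M ≤ countIcc L₀ M := by
    filter_upwards [hagree, hU (eventually_ge_atTop M)] with i hi hiM
    have hcount : countIcc L₀ M = countIcc {l | ns i + l ∈ A} M :=
      le_antisymm (Nat.count_mono_left fun k hk h => (hi k (Finset.mem_range.2 hk)).1 h)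
        (Nat.count_mono_left fun k hk h => (hi k (Finset.mem_range.2 hk)).2 h)
    rw [hcount]
    exact hns i M hiM
  exact le_of_tendsto ((hθ.mono_left hU).mul_const _) hdense

lemma lowerDensity_eq_of_le_of_frequently_le {L : Set ℕ} {δ : ℝ}
    (hle : ∀ n, δ * n ≤ countIcc L n) (hfreq : ∃ᶠ n in atTop, (countIcc L n : ℝ) ≤ δ * n + 1) :
    lowerDensity L = δ := by
  rw [lowerDensity_eq_liminf]
  apply le_antisymm
  · refine le_of_forall_pos_le_add fun ε hε => liminf_le_of_frequently_le ?_
      (isBoundedUnder_of ⟨0, countIcc_div_nonneg L⟩)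
    have hsmall : ∀ᶠ n : ℕ in atTop, 1 / (n : ℝ) < ε :=
      tendsto_one_div_atTop_nhds_zero_nat.eventually (gt_mem_nhds hε)
    refine (hfreq.and_eventually (hsmall.and (eventually_gt_atTop 0))).mono ?_
    rintro n ⟨hn, hnε, hn0⟩
    have hn0' : (0 : ℝ) < n := by exact_mod_cast hn0
    calc (countIcc L n : ℝ) / n ≤ (δ * n + 1) / n := by gcongr
      _ = δ + 1 / n := by field_simp
      _ ≤ δ + ε := by linarith
  · refine le_liminf_of_le (isCoboundedUnder_ge_of_le atTop (countIcc_div_le_one L))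
      ((eventually_gt_atTop 0).mono fun n hn => ?_)
    rw [le_div_iff₀ (by exact_mod_cast hn)]
    exact hle n

section Thinning

variable (S : Set ℕ) (c : ℕ → ℕ)

noncomputable def surplus (n : ℕ) : ℕ := countIcc S n - c n

noncomputable def minSurplus (n : ℕ) : ℕ := sInf (surplus S c '' Ici n)

/-- The number of elements of `S ∩ [1, n]` kept by the thinning: the fewest that still allow
`|L ∩ [1, j]| ≥ c j` for all `j ≥ n` when all of `S ∩ (n, j]` is kept. -/
noncomputable def thinCount (n : ℕ) : ℕ := countIcc S n - minSurplus S c n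

def thinning : Set ℕ := {m | thinCount S c (m - 1) < thinCount S c m}

lemma minSurplus_le_surplus {n j : ℕ} (h : n ≤ j) : minSurplus S c n ≤ surplus S c j :=
  Nat.sInf_le ⟨j, h, rfl⟩

lemma exists_surplus_eq_minSurplus (n : ℕ) : ∃ j ≥ n, surplus S c j = minSurplus S c n :=
  Nat.sInf_mem ⟨_, mem_image_of_mem _ (self_mem_Ici (a := n))⟩

lemma minSurplus_mono : Monotone (minSurplus S c) := fun n m hnm => by
  obtain ⟨j, hj, hjm⟩ := exists_surplus_eq_minSurplus S c m
  exact hjm ▸ minSurplus_le_surplus S c (hnm.trans hj)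

lemma thinCount_succ_le (n : ℕ) :
    thinCount S c (n + 1) ≤ thinCount S c n + if n + 1 ∈ S then 1 else 0 := by
  have hmono := minSurplus_mono S c (Nat.le_add_right n 1)
  have hle : minSurplus S c n ≤ countIcc S n :=
    (minSurplus_le_surplus S c le_rfl).trans (Nat.sub_le _ _)
  unfold thinCount
  rw [countIcc_succ]
  omega

lemma thinning_subset : thinning S c ⊆ S := by
  rintro (_ | n) hn
  · simp [thinning] at hn
  · by_contra hnS
    have := thinCount_succ_le S c n
    simp only [thinning, mem_ofPred_eq, Nat.add_sub_cancel, if_neg hnS] at hn this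
    omega

variable {S c} (hcS : ∀ n, c n ≤ countIcc S n)
include hcS

lemma le_thinCount (n : ℕ) : c n ≤ thinCount S c n := by
  have := minSurplus_le_surplus S c (le_refl n)
  have := hcS n
  unfold thinCount surplus at *
  omega

lemma thinCount_mono (hc : Monotone c) : Monotone (thinCount S c) := by
  refine monotone_nat_of_le_succ fun n => ?_
  obtain ⟨j, hj, hjn⟩ := exists_surplus_eq_minSurplus S c n
  rcases hj.eq_or_lt with rfl | hj
  · have := hcS n
    have := le_thinCount hcS (n + 1)
    have := hc (Nat.le_add_right n 1)
    unfold thinCount surplus at *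
    omega
  · have := hjn ▸ minSurplus_le_surplus S c (show n + 1 ≤ j from hj)
    have := Nat.count_monotone (fun k => k + 1 ∈ S) (Nat.le_add_right n 1)
    unfold thinCount countIcc at *
    omega

lemma frequently_thinCount_eq : ∃ᶠ n in atTop, thinCount S c n = c n := by
  refine frequently_atTop.2 fun K => ?_
  obtain ⟨j, hj, hjK⟩ := exists_surplus_eq_minSurplus S c K
  refine ⟨j, hj, ?_⟩
  have := minSurplus_mono S c hj
  have := minSurplus_le_surplus S c (le_refl j)
  have := hcS j
  unfold thinCount surplus at *
  omega

lemma countIcc_thinning (hc : Monotone c) (n : ℕ) :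
    countIcc (thinning S c) n = thinCount S c n := by
  induction n with
  | zero => simp [countIcc, thinCount]
  | succ n ih =>
    have := thinCount_mono hcS hc (Nat.le_add_right n 1)
    have := thinCount_succ_le S c n
    rw [countIcc_succ, ih]
    simp only [thinning, mem_ofPred_eq, Nat.add_sub_cancel]
    split_ifs at * <;> omega

end Thinning

lemma exists_subset_lowerDensity_eq {S : Set ℕ} {δ : ℝ} (hδ : 0 ≤ δ)
    (hS : ∀ n, δ * n ≤ countIcc S n) : ∃ L ⊆ S, lowerDensity L = δ := by
  set c : ℕ → ℕ := fun n => ⌈δ * n⌉₊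
  have hc : Monotone c := fun m n h => Nat.ceil_mono (by gcongr)
  have hcS (n : ℕ) : c n ≤ countIcc S n := Nat.ceil_le.2 (hS n)
  refine ⟨thinning S c, thinning_subset S c,
    lowerDensity_eq_of_le_of_frequently_le (fun n => ?_) ?_⟩
  · rw [countIcc_thinning hcS hc]
    exact (Nat.le_ceil _).trans (by exact_mod_cast le_thinCount hcS n)
  · refine (frequently_thinCount_eq hcS).mono fun n hn => ?_
    rw [countIcc_thinning hcS hc, hn]
    exact (Nat.ceil_lt_add_one (by positivity)).le

theorem exists_L_upper_density (A : Set ℕ) (hA : 0 < upperDensity A) :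
    ∃ L : Set ℕ, lowerDensity L = upperDensity A ∧
      ∀ F : Finset ℕ, ↑F ⊆ L →
        0 < upperDensity (⋂ l ∈ F, {a : ℕ | a + l ∈ A}) := by
  set δ := upperDensity A
  set θ : ℕ → ℝ := fun i => δ - δ / (i + 1)
  have hθ : Tendsto θ atTop (𝓝 δ) := by
    have : Tendsto (fun i : ℕ => δ / ((i : ℝ) + 1)) atTop (𝓝 0) := by
      exact_mod_cast (tendsto_add_atTop_iff_nat 1).2 (tendsto_const_div_atTop_nhds_zero_nat δ)
    simpa using tendsto_const_nhds.sub this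
  obtain ⟨ns, hdense, havoid⟩ := exists_seq_isDenseAfter (θ := θ)
    (fun i => sub_nonneg.2 (div_le_self hA.le (by linarith [i.cast_nonneg (α := ℝ)])))
    (fun i => sub_lt_self _ (by positivity))
  set U := hyperfilter ℕ
  have hU : (U : Filter ℕ) ≤ atTop := Nat.cofinite_eq_atTop ▸ hyperfilter_le_cofinite
  obtain ⟨L, hL, hLδ⟩ :=
    exists_subset_lowerDensity_eq hA.le (le_countIcc_ultrafilter_limit hU hθ hdense)
  refine ⟨L, hLδ, fun F hF => lt_of_not_ge fun hnull => ?_⟩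
  have hmem : ∀ᶠ i in U, ns i ∈ ⋂ l ∈ F, {a | a + l ∈ A} := by
    simpa only [mem_iInter₂, mem_ofPred_eq] using
      (eventually_all_finset F).2 fun l hl => hL (hF hl)
  obtain ⟨i, hi_avoid, hi_mem⟩ := ((havoid F hnull).filter_mono hU |>.and hmem).exists
  exact hi_avoid hi_mem
end

section
/- Let A ⊆ ℕ satisfy BD(A) > 0. Then for every ε > 0 there exists n ∈ ℕ such that BD(A_[n]) ≥ 1 − ε, where A_[n] ⊆ ℕ is defined by: k ∈ A_[n] if and only if [kn, kn + n − 1] ∩ A ≠ ∅. -/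
/-- `A_[n]`: the set of `k` such that the block `[kn, kn + n - 1]` meets `A`. -/
def blockSet (A : Set ℕ) (n : ℕ) : Set ℕ :=
  {k : ℕ | (A ∩ Set.Icc (k * n) (k * n + n - 1)).Nonempty}

/-!
Suppose every `A_[n]` has Banach density below `e < 1`. Call `c` a block bound at scale `n`
if every aligned block `[mn, (m+1)n)` holds at most `cn` elements of `A`; `c = 1` works at
scale `1`. If `c` works at scale `n`, choose `L` so that every window of length `L` meets at
most `eL` elements of `A_[n]`; then a block of length `nL` consists of `L` blocks of length `n`,
at most `eL` of which meet `A`, so `ec` works at scale `nL`. Iterating, `e^k` is a block bound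
at some scale for every `k`, and a block bound at any scale bounds `BD(A)`, so `BD(A) = 0`.
-/

open Filter Set Topology

noncomputable def intervalCount (A : Set ℕ) (a b : ℕ) : ℕ := (A ∩ Ico a b).ncard

section intervalCount

variable (A : Set ℕ)

lemma intervalCount_le_sub (a b : ℕ) : intervalCount A a b ≤ b - a :=
  (ncard_le_ncard inter_subset_right (finite_Ico a b)).trans_eq (ncard_Ico_nat a b)

lemma intervalCount_mono {a a' b b' : ℕ} (ha : a' ≤ a) (hb : b ≤ b') :
    intervalCount A a b ≤ intervalCount A a' b' :=
  ncard_le_ncard (inter_subset_inter_right A (Ico_subset_Ico ha hb))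
    ((finite_Ico a' b').inter_of_right A)

lemma intervalCount_add {a b c : ℕ} (hab : a ≤ b) (hbc : b ≤ c) :
    intervalCount A a c = intervalCount A a b + intervalCount A b c := by
  rw [intervalCount, ← Ico_union_Ico_eq_Ico hab hbc, inter_union_distrib_left]
  exact ncard_union_eq (Ico_disjoint_Ico_same.mono inter_subset_right inter_subset_right)
    ((finite_Ico a b).inter_of_right A) ((finite_Ico b c).inter_of_right A)

lemma intervalCount_mul_eq_sum (n a : ℕ) : ∀ K : ℕ,
    intervalCount A (a * n) ((a + K) * n) =
      ∑ k ∈ Finset.Ico a (a + K), intervalCount A (k * n) ((k + 1) * n)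
  | 0 => by simp [intervalCount]
  | K + 1 => by
    rw [← add_assoc, Finset.sum_Ico_succ_top (Nat.le_add_right a K),
      ← intervalCount_mul_eq_sum n a K]
    exact intervalCount_add A (Nat.mul_le_mul_right n (Nat.le_add_right a K))
      (Nat.mul_le_mul_right n (Nat.le_succ _))

lemma sum_Ico_le_intervalCount_mul {f : ℕ → ℝ} {C : ℝ} (hf : ∀ k ∉ A, f k = 0)
    (hC : ∀ k ∈ A, f k ≤ C) (a b : ℕ) :
    ∑ k ∈ Finset.Ico a b, f k ≤ intervalCount A a b * C := by
  classical
  rw [← Finset.sum_filter_of_ne fun k _ hk => by_contra fun hkA => hk (hf k hkA)]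
  calc _ ≤ (Finset.filter (· ∈ A) (Finset.Ico a b)).card • C :=
        Finset.sum_le_card_nsmul _ _ _ fun k hk => hC k (Finset.mem_filter.1 hk).2
    _ = intervalCount A a b * C := by
        rw [nsmul_eq_mul, intervalCount, ← ncard_coe_finset]
        congr 3
        ext x
        simp [and_comm]

lemma mem_blockSet_iff_intervalCount_pos {n : ℕ} (hn : 0 < n) (k : ℕ) :
    k ∈ blockSet A n ↔ 0 < intervalCount A (k * n) ((k + 1) * n) := by
  have hblock : Icc (k * n) (k * n + n - 1) = Ico (k * n) ((k + 1) * n) := by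
    ext x
    simp only [mem_Icc, mem_Ico, add_mul, one_mul]
    omega
  rw [intervalCount, ncard_pos ((finite_Ico _ _).inter_of_right A), blockSet, mem_ofPred_eq,
    hblock]

end intervalCount

noncomputable def windowDensity (A : Set ℕ) (L : ℕ) : ℝ :=
  ⨆ m : ℕ, (intervalCount A m (m + L + 1) : ℝ) / L

section windowDensity

variable (A : Set ℕ)

lemma banachDensity_eq_limsup_windowDensity :
    banachDensity A = limsup (windowDensity A) atTop := by
  unfold banachDensity windowDensity intervalCount
  simp only [Nat.card_coe_set_eq, Ico_add_one_right_eq_Icc]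

lemma windowDensity_nonneg (L : ℕ) : 0 ≤ windowDensity A L :=
  Real.iSup_nonneg fun _ => by positivity

lemma intervalCount_le_mul_windowDensity {L : ℕ} (hL : 0 < L) (m : ℕ) :
    (intervalCount A m (m + L + 1) : ℝ) ≤ L * windowDensity A L := by
  have hbdd : BddAbove (range fun m => (intervalCount A m (m + L + 1) : ℝ) / L) := by
    refine ⟨(L + 1 : ℝ) / L, ?_⟩
    rintro _ ⟨m, rfl⟩
    refine div_le_div_of_nonneg_right ?_ (Nat.cast_nonneg L)
    exact_mod_cast (intervalCount_le_sub A _ _).trans_eq (by omega)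
  rw [← div_le_iff₀' (by exact_mod_cast hL)]
  exact le_ciSup hbdd m

end windowDensity

lemma tendsto_const_add_div_atTop (c d : ℝ) :
    Tendsto (fun L : ℕ => c + d / L) atTop (𝓝 c) := by
  simpa using tendsto_const_nhds.add (tendsto_const_div_atTop_nhds_zero_nat d)

def HasBlockBound (A : Set ℕ) (n : ℕ) (c : ℝ) : Prop :=
  ∀ m, (intervalCount A (m * n) ((m + 1) * n) : ℝ) ≤ c * n

lemma hasBlockBound_one (A : Set ℕ) : HasBlockBound A 1 1 := fun m => by
  simpa using intervalCount_le_sub A m (m + 1)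

namespace HasBlockBound

variable {A : Set ℕ} {n : ℕ} {c : ℝ}

lemma nonneg (hn : 0 < n) (h : HasBlockBound A n c) : 0 ≤ c :=
  nonneg_of_mul_nonneg_left ((Nat.cast_nonneg _).trans (h 0)) (by exact_mod_cast hn)

lemma intervalCount_le (hn : 0 < n) (h : HasBlockBound A n c) (a K : ℕ) :
    (intervalCount A (a * n) ((a + K) * n) : ℝ) ≤
      intervalCount (blockSet A n) a (a + K) * (c * n) := by
  rw [intervalCount_mul_eq_sum, Nat.cast_sum]
  refine sum_Ico_le_intervalCount_mul _ (fun k hk => ?_) (fun k _ => h k) a (a + K)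
  rw [mem_blockSet_iff_intervalCount_pos A hn, not_lt, Nat.le_zero] at hk
  simp [hk]

lemma windowDensity_le (hn : 0 < n) (h : HasBlockBound A n c) {L : ℕ} (hL : 0 < L) :
    windowDensity A L ≤ c + 2 * c * n / L := by
  have hc := h.nonneg hn
  refine ciSup_le fun m => ?_
  -- the window `[m, m + L]` lies in the `L / n + 2` blocks starting with the one containing `m`
  have hcover : intervalCount A m (m + L + 1) ≤
      intervalCount A (m / n * n) ((m / n + (L / n + 2)) * n) := by
    refine intervalCount_mono A (Nat.div_mul_le_self m n) ?_
    have := Nat.lt_div_mul_add (a := m) hn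
    have := Nat.lt_div_mul_add (a := L) hn
    nlinarith
  have hLn : ((L / n : ℕ) : ℝ) * n ≤ L := by exact_mod_cast Nat.div_mul_le_self L n
  rw [div_le_iff₀ (by exact_mod_cast hL)]
  calc (intervalCount A m (m + L + 1) : ℝ)
      ≤ intervalCount (blockSet A n) (m / n) (m / n + (L / n + 2)) * (c * n) :=
        (Nat.cast_le.2 hcover).trans (h.intervalCount_le hn _ _)
    _ ≤ ((L / n + 2 : ℕ) : ℝ) * (c * n) := by
        refine mul_le_mul_of_nonneg_right (Nat.cast_le.2 ?_) (by positivity)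
        exact (intervalCount_le_sub _ _ _).trans_eq (Nat.add_sub_cancel_left ..)
    _ ≤ (c + 2 * c * n / L) * L := by
        rw [add_mul, div_mul_cancel₀ _ (by positivity)]
        push_cast
        nlinarith

lemma banachDensity_le (hn : 0 < n) (h : HasBlockBound A n c) : banachDensity A ≤ c := by
  have hlim := tendsto_const_add_div_atTop c (2 * c * n)
  rw [banachDensity_eq_limsup_windowDensity, ← hlim.limsup_eq]
  exact limsup_le_limsup ((eventually_gt_atTop 0).mono fun L hL => h.windowDensity_le hn hL)
    (isCoboundedUnder_le_of_le atTop (windowDensity_nonneg A)) hlim.isBoundedUnder_le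

end HasBlockBound

lemma isBoundedUnder_windowDensity (A : Set ℕ) : IsBoundedUnder (· ≤ ·) atTop (windowDensity A) :=
  (tendsto_const_add_div_atTop 1 2).isBoundedUnder_le.mono_le <|
    (eventually_gt_atTop 0).mono fun L hL => by
      simpa using (hasBlockBound_one A).windowDensity_le one_pos hL

namespace HasBlockBound

variable {A : Set ℕ} {n : ℕ} {c : ℝ}

lemma exists_mul_of_banachDensity_blockSet_lt (hn : 0 < n) (h : HasBlockBound A n c) {e : ℝ}
    (he : banachDensity (blockSet A n) < e) : ∃ N, 0 < N ∧ HasBlockBound A N (e * c) := by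
  set B := blockSet A n
  rw [banachDensity_eq_limsup_windowDensity] at he
  obtain ⟨L, hLe, hL⟩ := ((eventually_lt_of_limsup_lt he (isBoundedUnder_windowDensity B)).and
    (eventually_gt_atTop 0)).exists
  refine ⟨n * L, by positivity, fun m => ?_⟩
  have hB : (intervalCount B (m * L) (m * L + L) : ℝ) ≤ e * L :=
    calc (intervalCount B (m * L) (m * L + L) : ℝ)
        ≤ intervalCount B (m * L) (m * L + L + 1) := by
          exact_mod_cast intervalCount_mono B le_rfl (Nat.le_succ _)
      _ ≤ L * windowDensity B L := intervalCount_le_mul_windowDensity B hL _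
      _ ≤ e * L := by rw [mul_comm]; gcongr
  have hcn : 0 ≤ c * n := mul_nonneg (h.nonneg hn) (Nat.cast_nonneg n)
  calc (intervalCount A (m * (n * L)) ((m + 1) * (n * L)) : ℝ)
      = intervalCount A (m * L * n) ((m * L + L) * n) := by
        rw [show m * (n * L) = m * L * n by ring, show (m + 1) * (n * L) = (m * L + L) * n by ring]
    _ ≤ intervalCount B (m * L) (m * L + L) * (c * n) := h.intervalCount_le hn _ _
    _ ≤ e * L * (c * n) := by gcongr
    _ = e * c * ↑(n * L) := by push_cast; ring

end HasBlockBound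

lemma exists_hasBlockBound_pow {A : Set ℕ} {e : ℝ}
    (he : ∀ n, 0 < n → banachDensity (blockSet A n) < e) :
    ∀ k : ℕ, ∃ n, 0 < n ∧ HasBlockBound A n (e ^ k)
  | 0 => ⟨1, one_pos, by simpa using hasBlockBound_one A⟩
  | k + 1 => by
    obtain ⟨n, hn, h⟩ := exists_hasBlockBound_pow he k
    rw [pow_succ']
    exact h.exists_mul_of_banachDensity_blockSet_lt hn (he n hn)

theorem blockSet_density (A : Set ℕ) (hA : 0 < banachDensity A) :
    ∀ ε : ℝ, 0 < ε → ∃ n : ℕ, 0 < n ∧ banachDensity (blockSet A n) ≥ 1 - ε := by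
  intro ε hε
  by_contra! hsmall
  obtain ⟨k, hk⟩ := exists_pow_lt_of_lt_one hA (by linarith : 1 - ε < 1)
  obtain ⟨n, hn, hbound⟩ := exists_hasBlockBound_pow hsmall k
  exact (hbound.banachDensity_le hn).not_gt hk
end
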